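/- arXiv:0801.0465 — 7 statements merged into one kernel-verified Lean document; each statement's English description precedes it below -/
import Mathlib

section
/- Let A_d be the d×d matrix over F whose (i,j)-entry is (v_i·v_j − 1)^{-1}. Then det(A_d) = ∏_{1≤k<j≤d}(v_k − v_j)² · ∏_{1≤k,j≤d}(v_k·v_j − 1)^{-1}; equivalently, det(A_d)·∏_{1≤k,j≤d}(v_k·v_j − 1) = ∏_{1≤k<j≤d}(v_k − v_j)². -/
/-!
The determinant is a Cauchy-type determinant and is computed by induction on `d`, for the
more general matrix `((xᵢ yⱼ - 1)⁻¹)` with two independent families `x`, `y`. Scaling column `j`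
by `x₀ yⱼ - 1` makes the first row constant `1`; subtracting the first column from the others
and expanding along the first row leaves the minor with entries
`(x₀ - xᵢ)(y₀ - yⱼ) / ((xᵢ yⱼ - 1)(xᵢ y₀ - 1))`, which after pulling out row and column factors
is the same matrix for the tails of `x` and `y`.
-/

open Finset Matrix

theorem Fin.prod_prod_succ {M : Type*} [CommMonoid M] {n : ℕ}
    (f : Fin (n + 1) → Fin (n + 1) → M) :
    ∏ i, ∏ j, f i j =
      (∏ j, f 0 j) * ((∏ i : Fin n, f i.succ 0) * ∏ i : Fin n, ∏ j : Fin n, f i.succ j.succ) := by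
  rw [Fin.prod_univ_succ, ← prod_mul_distrib]
  simp only [Fin.prod_univ_succ (f _)]

theorem Fin.prod_prod_Ioi_succ {M : Type*} [CommMonoid M] {n : ℕ}
    (f : Fin (n + 1) → Fin (n + 1) → M) :
    ∏ i, ∏ j ∈ Ioi i, f i j =
      (∏ j : Fin n, f 0 j.succ) * ∏ i : Fin n, ∏ j ∈ Ioi i, f i.succ j.succ := by
  simp only [Fin.prod_univ_succ, Fin.prod_Ioi_zero, Fin.prod_Ioi_succ]

namespace Matrix

theorem det_succ_eq_det_sub_col_zero_of_row_zero_eq_one {R : Type*} [CommRing R] {n : ℕ}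
    (C : Matrix (Fin (n + 1)) (Fin (n + 1)) R) (hC : ∀ j, C 0 j = 1) :
    C.det = (of fun i j : Fin n => C i.succ j.succ - C i.succ 0).det := by
  set D : Matrix (Fin (n + 1)) (Fin (n + 1)) R :=
    of fun i => Fin.cons (C i 0) fun j => C i j.succ - C i 0
  have hCD : C.det = D.det := by
    rw [← det_transpose C, ← det_transpose D]
    refine det_eq_of_forall_row_eq_smul_add_const (Fin.cons 0 fun _ => 1) 0 rfl fun j i => ?_
    refine Fin.cases ?_ (fun j => ?_) j <;> simp [D]
  rw [hCD, det_succ_row_zero, Fin.sum_univ_succ]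
  simp [D, hC, submatrix]

variable {F : Type*} [Field F]

theorem det_of_inv_mul_sub_one_succ {n : ℕ} (x y : Fin (n + 1) → F)
    (h : ∀ i j, x i * y j ≠ 1) :
    (of fun i j => (x i * y j - 1)⁻¹).det =
      (∏ j, (x 0 * y j - 1))⁻¹ * ((∏ i : Fin n, (x 0 - x i.succ) / (x i.succ * y 0 - 1)) *
        ((∏ j : Fin n, (y 0 - y j.succ)) *
          (of fun i j : Fin n => (x i.succ * y j.succ - 1)⁻¹).det)) := by
  have hne : ∀ i j, x i * y j - 1 ≠ 0 := fun i j => sub_ne_zero.mpr (h i j)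
  calc (of fun i j => (x i * y j - 1)⁻¹).det
      = (∏ j, (x 0 * y j - 1))⁻¹ * (of fun i j => (x 0 * y j - 1) / (x i * y j - 1)).det := by
        rw [← prod_inv_distrib, ← det_mul_row]
        congr with i j
        rw [of_apply, div_eq_mul_inv, inv_mul_cancel_left₀ (hne 0 j)]
    _ = (∏ j, (x 0 * y j - 1))⁻¹ *
          (of fun i j : Fin n => (x 0 - x i.succ) / (x i.succ * y 0 - 1) *
            ((y 0 - y j.succ) * (x i.succ * y j.succ - 1)⁻¹)).det := by
        rw [det_succ_eq_det_sub_col_zero_of_row_zero_eq_one _ fun j => div_self (hne 0 j)]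
        congr with i j
        have ha := mul_inv_cancel₀ (hne i.succ j.succ)
        have hb := mul_inv_cancel₀ (hne i.succ 0)
        simp only [of_apply, div_eq_mul_inv]
        linear_combination (x 0 * y 0 - 1) * (x i.succ * y 0 - 1)⁻¹ * ha -
          (x 0 * y j.succ - 1) * (x i.succ * y j.succ - 1)⁻¹ * hb
    _ = _ := by
        rw [← det_mul_row, ← det_mul_column]
        rfl

theorem det_of_inv_mul_sub_one_mul_prod {n : ℕ} (x y : Fin n → F)
    (h : ∀ i j, x i * y j ≠ 1) :
    (of fun i j => (x i * y j - 1)⁻¹).det * ∏ i, ∏ j, (x i * y j - 1) =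
      (∏ i, ∏ j ∈ Ioi i, (x i - x j)) * ∏ i, ∏ j ∈ Ioi i, (y i - y j) := by
  induction n with
  | zero => simp
  | succ n ih =>
    have hne : ∀ i j, x i * y j - 1 ≠ 0 := fun i j => sub_ne_zero.mpr (h i j)
    have h0 : ∏ j, (x 0 * y j - 1) ≠ 0 := prod_ne_zero_iff.mpr fun j _ => hne 0 j
    have h1 : ∏ i : Fin n, (x i.succ * y 0 - 1) ≠ 0 :=
      prod_ne_zero_iff.mpr fun i _ => hne i.succ 0
    rw [det_of_inv_mul_sub_one_succ x y h, Fin.prod_prod_succ, Fin.prod_prod_Ioi_succ,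
      Fin.prod_prod_Ioi_succ, mul_mul_mul_comm (∏ j : Fin n, (x 0 - x j.succ)),
      ← ih (fun i => x i.succ) (fun j => y j.succ) fun i j => h i.succ j.succ,
      prod_div_distrib]
    generalize ∏ i : Fin n, (x i.succ * y 0 - 1) = Q at h1 ⊢
    field_simp

end Matrix

/-- Let `F` be a field and `v₁,…,v_d ∈ F` with `vᵢ·vⱼ ≠ 1` for all `i,j`.
Let `A_d` be the `d×d` matrix whose `(i,j)` entry is `(vᵢ·vⱼ − 1)⁻¹`.  Then
`det A_d = ∏_{k<j}(v_k − v_j)² · (∏_{k,j}(v_k·v_j − 1))⁻¹`; equivalently,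
`det A_d · ∏_{k,j}(v_k·v_j − 1) = ∏_{k<j}(v_k − v_j)²`. -/
theorem stmt_0 {F : Type*} [Field F] {d : ℕ} (v : Fin d → F)
    (hv : ∀ i j : Fin d, v i * v j ≠ 1) :
    (Matrix.of fun i j : Fin d => (v i * v j - 1)⁻¹).det =
      (∏ k : Fin d, ∏ j ∈ Finset.Ioi k, (v k - v j) ^ 2) *
        (∏ k : Fin d, ∏ j : Fin d, (v k * v j - 1))⁻¹ ∧
    (Matrix.of fun i j : Fin d => (v i * v j - 1)⁻¹).det *
        (∏ k : Fin d, ∏ j : Fin d, (v k * v j - 1)) =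
      ∏ k : Fin d, ∏ j ∈ Finset.Ioi k, (v k - v j) ^ 2 := by
  have key : (of fun i j : Fin d => (v i * v j - 1)⁻¹).det *
      (∏ k : Fin d, ∏ j : Fin d, (v k * v j - 1)) =
      ∏ k : Fin d, ∏ j ∈ Ioi k, (v k - v j) ^ 2 := by
    simp only [det_of_inv_mul_sub_one_mul_prod v v hv, ← prod_mul_distrib, sq]
  have hP : ∏ k : Fin d, ∏ j : Fin d, (v k * v j - 1) ≠ 0 :=
    prod_ne_zero_iff.mpr fun k _ => prod_ne_zero_iff.mpr fun j _ => sub_ne_zero.mpr (hv k j)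
  exact ⟨(eq_mul_inv_iff_mul_eq₀ hP).mpr key, key⟩
end

section
/- For every 1 ≤ j ≤ d one has ∑_{k=1}^d γ_k/(v_j·v_k − 1) = δ^{-1}·ϱ + 1/(v_j² − 1). -/
/-!
Put `Q(x) = ∏_{l ≠ j} (x vₗ - 1)` and `W_k = ∏_{l ≠ k} (v_k - vₗ)`. Since
`∏_{l ≠ k} (v_k vₗ - 1) / (vⱼ v_k - 1) = Q(v_k) / (v_k² - 1)`, the sum splits into
`δ⁻¹ϱ · ∑ₖ (∏_{l ≠ k} vₗ) Q(v_k) / W_k` and `∑ₖ γ_d(v_k) Q(v_k) / ((v_k² - 1) W_k)`,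
and both are Lagrange interpolation sums over the nodes `v_k`.

The first is the partial fraction expansion of `Q(x) / ∏ₗ (x - vₗ)` at `x = 0` and equals `1`.
For the second, `X` is its own inverse modulo `X² - 1`, which together with the parity of `d`
gives `γ_d · Q ≡ ∏_{l ≠ j} (X - vₗ)`; hence `γ_d · Q + a (X + vⱼ) ∏ₗ (X - vₗ)` with
`a = (vⱼ² - 1)⁻¹` is `X² - 1` times a polynomial of degree `< d` that interpolates
`γ_d Q / (X² - 1)` at the nodes and whose coefficient of `X^(d-1)` is `a`. Dividing by `X² - 1` as a whole, not by `X - 1` and `X + 1` separately, keeps this valid in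
characteristic `2`.
-/

open Polynomial Finset

theorem Finset.dvd_prod_sub_prod {R ι : Type*} [CommRing R] {a : R} {s : Finset ι} {f g : ι → R}
    (h : ∀ i ∈ s, a ∣ f i - g i) : a ∣ ∏ i ∈ s, f i - ∏ i ∈ s, g i := by
  simp_rw [← Ideal.mem_span_singleton, ← Ideal.Quotient.eq, map_prod] at h ⊢
  exact prod_congr rfl h

namespace Polynomial

variable {R ι : Type*} [CommRing R]

theorem X_sq_sub_one_dvd_X_pow_mul_prod_sub (s : Finset ι) (v : ι → R) :
    X ^ 2 - 1 ∣ X ^ #s * ∏ l ∈ s, (X - C (v l)) - (-1) ^ #s * ∏ l ∈ s, (X * C (v l) - 1) := by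
  rw [← prod_const, ← prod_mul_distrib, ← prod_neg]
  exact dvd_prod_sub_prod fun l _ ↦ ⟨1, by ring⟩

theorem X_sq_sub_one_dvd_ite_mul_prod_sub_prod (s : Finset ι) (v : ι → R) {d : ℕ}
    (hd : #s + 1 = d) :
    X ^ 2 - 1 ∣
      (if Odd d then 1 else -X) * ∏ l ∈ s, (X * C (v l) - 1) - ∏ l ∈ s, (X - C (v l)) := by
  have h := X_sq_sub_one_dvd_X_pow_mul_prod_sub s v
  set Q := ∏ l ∈ s, (X * C (v l) - 1)
  set M := ∏ l ∈ s, (X - C (v l))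
  split_ifs with hodd
  · have hs : Even #s := by subst hd; simpa [parity_simps] using hodd
    rw [hs.neg_one_pow] at h
    have e : 1 * Q - M = (X ^ #s - 1) * M - (X ^ #s * M - 1 * Q) := by ring
    rw [e]
    exact (dvd_mul_of_dvd_left (dvd_pow_sub_one_of_dvd (even_iff_two_dvd.mp hs)) _).sub h
  · have hs : Odd #s := by subst hd; simpa [parity_simps] using hodd
    rw [hs.neg_one_pow] at h
    have e : -X * Q - M = (X ^ (#s + 1) - 1) * M - X * (X ^ #s * M - -1 * Q) := by ring
    rw [e]
    exact (dvd_mul_of_dvd_left (dvd_pow_sub_one_of_dvd (even_iff_two_dvd.mp hs.add_one)) _).sub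
      (h.mul_left X)

theorem natDegree_prod_X_mul_C_sub_one_le (s : Finset ι) (v : ι → R) :
    (∏ l ∈ s, (X * C (v l) - 1)).natDegree ≤ #s := by
  refine (natDegree_prod_le _ _).trans ((sum_le_card_nsmul s _ 1 fun l _ ↦ ?_).trans_eq (mul_one _))
  compute_degree

end Polynomial

namespace Lagrange

variable {F ι : Type*} [Field F] [DecidableEq ι] {s : Finset ι} {v : ι → F}

theorem sum_eval_div_sub_mul_prod_sub (hvs : Set.InjOn v s) {P : F[X]} (hP : P.degree < #s)
    {x : F} (hx : ∀ i ∈ s, x ≠ v i) :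
    ∑ i ∈ s, P.eval (v i) / ((v i - x) * ∏ j ∈ s.erase i, (v i - v j)) =
      -(P.eval x / ∏ i ∈ s, (x - v i)) := by
  have hN : ∏ i ∈ s, (x - v i) ≠ 0 := prod_ne_zero_iff.mpr fun i hi ↦ sub_ne_zero.mpr (hx i hi)
  have h := eval_interpolate_not_at_node (fun i ↦ P.eval (v i)) hx
  rw [← eq_interpolate hvs hP, eval_nodal] at h
  rw [h, mul_div_cancel_left₀ _ hN, ← sum_neg_distrib]
  refine sum_congr rfl fun i hi ↦ ?_
  have hxi : v i - x ≠ 0 := sub_ne_zero.mpr (hx i hi).symm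
  rw [nodalWeight, prod_inv_distrib, ← neg_sub (v i) x, inv_neg]
  field_simp

theorem sum_eval_div_sq_sub_one_mul_prod_sub (hvs : Set.InjOn v s) (hs : s.Nonempty)
    (hv : ∀ i ∈ s, v i ^ 2 ≠ 1) {G : F[X]} (hG : G.natDegree ≤ #s) {a b : F}
    (hdvd : X ^ 2 - 1 ∣ G + nodal s v * (C a * X + C b)) :
    ∑ i ∈ s, G.eval (v i) / ((v i ^ 2 - 1) * ∏ j ∈ s.erase i, (v i - v j)) = a := by
  obtain ⟨H, hH⟩ := hdvd
  obtain ⟨m, hm⟩ : ∃ m, #s = m + 1 := Nat.exists_eq_add_one.mpr hs.card_pos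
  have hNdeg : (nodal s v).natDegree = #s := natDegree_nodal
  have hHnat : H.natDegree ≤ m := by
    rcases eq_or_ne H 0 with rfl | hH0
    · simp
    have h2 : (X ^ 2 - 1 : F[X]).natDegree = 2 := by compute_degree!
    have := natDegree_mul (p := X ^ 2 - 1) (by rw [← C_1]; exact X_pow_sub_C_ne_zero two_pos 1) hH0
    rw [← hH, h2] at this
    have hle : (G + nodal s v * (C a * X + C b)).natDegree ≤ #s + 1 :=
      natDegree_add_le_of_degree_le (hG.trans (Nat.le_succ _))
        (natDegree_mul_le_of_le hNdeg.le natDegree_linear_le)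
    omega
  have hHdeg : H.degree < #s :=
    degree_le_natDegree.trans_lt (by rw [hm]; exact_mod_cast Nat.lt_succ_of_le hHnat)
  have hcoeff : (H * X ^ 2 - H).coeff (#s + 1) = a := by
    have e : H * X ^ 2 - H = G + C a * (nodal s v * X) + C b * nodal s v := by
      rw [← mul_sub_one, mul_comm, ← hH]
      ring
    rw [e, coeff_add, coeff_add, coeff_C_mul, coeff_C_mul, coeff_mul_X, ← hNdeg,
      nodal_monic.coeff_natDegree, coeff_eq_zero_of_natDegree_lt (by omega),
      coeff_eq_zero_of_natDegree_lt (by omega)]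
    ring
  rw [hm, coeff_sub, coeff_mul_X_pow, coeff_eq_zero_of_natDegree_lt (n := m + 2) (by omega),
    sub_zero, ← Nat.add_sub_cancel m 1, ← hm, coeff_eq_sum hvs hHdeg] at hcoeff
  rw [← hcoeff]
  refine sum_congr rfl fun i hi ↦ ?_
  have hi2 : v i ^ 2 - 1 ≠ 0 := sub_ne_zero.mpr (hv i hi)
  have hHi := congrArg (eval (v i)) hH
  simp only [eval_add, eval_mul, eval_nodal_at_node hi, zero_mul, add_zero, eval_sub, eval_pow,
    eval_X, eval_one] at hHi
  rw [hHi, mul_comm, ← div_div, mul_div_cancel_right₀ _ hi2]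

theorem sum_prod_erase_mul_prod_div_prod_sub (hvs : Set.InjOn v s) (hv0 : ∀ i ∈ s, v i ≠ 0)
    {j : ι} (hj : j ∈ s) :
    ∑ k ∈ s, (∏ l ∈ s.erase k, v l) * (∏ l ∈ s.erase j, (v k * v l - 1)) /
      ∏ l ∈ s.erase k, (v k - v l) = 1 := by
  set Q : F[X] := ∏ l ∈ s.erase j, (X * C (v l) - 1)
  have hQeval (x : F) : Q.eval x = ∏ l ∈ s.erase j, (x * v l - 1) := by
    simp only [Q, eval_prod, eval_sub, eval_mul, eval_X, eval_C, eval_one]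
  have hQdeg : Q.degree < #s :=
    degree_le_natDegree.trans_lt <| WithBot.coe_lt_coe.mpr <|
      (natDegree_prod_X_mul_C_sub_one_le _ v).trans_lt (card_erase_lt_of_mem hj)
  have hV : ∏ l ∈ s, v l ≠ 0 := prod_ne_zero_iff.mpr hv0
  have h := sum_eval_div_sub_mul_prod_sub hvs hQdeg (x := 0) fun i hi ↦ (hv0 i hi).symm
  simp only [hQeval, sub_zero, zero_mul, zero_sub, prod_neg, prod_const_one, mul_one,
    card_erase_of_mem hj] at h
  obtain ⟨m, hm⟩ : ∃ m, #s = m + 1 := Nat.exists_eq_add_one.mpr (card_pos.mpr ⟨j, hj⟩)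
  rw [hm, Nat.add_sub_cancel, pow_succ] at h
  calc _ = (∏ l ∈ s, v l) * ∑ k ∈ s, (∏ l ∈ s.erase j, (v k * v l - 1)) /
        (v k * ∏ l ∈ s.erase k, (v k - v l)) := by
        rw [mul_sum]
        refine sum_congr rfl fun k hk ↦ ?_
        rw [← mul_prod_erase s v hk]
        field_simp [hv0 k hk]
    _ = 1 := by
        rw [h]
        field_simp

theorem sum_eval_mul_prod_div_sq_sub_one_mul_prod_sub (hvs : Set.InjOn v s)
    (hv : ∀ i ∈ s, v i ^ 2 ≠ 1) {j : ι} (hj : j ∈ s) {c : F[X]} (hc : c.natDegree ≤ 1)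
    (hcQ : X ^ 2 - 1 ∣ c * ∏ l ∈ s.erase j, (X * C (v l) - 1) - ∏ l ∈ s.erase j, (X - C (v l))) :
    ∑ k ∈ s, c.eval (v k) * (∏ l ∈ s.erase j, (v k * v l - 1)) /
      ((v k ^ 2 - 1) * ∏ l ∈ s.erase k, (v k - v l)) = (v j ^ 2 - 1)⁻¹ := by
  set Q : F[X] := ∏ l ∈ s.erase j, (X * C (v l) - 1)
  set M : F[X] := ∏ l ∈ s.erase j, (X - C (v l))
  set a := (v j ^ 2 - 1)⁻¹
  have hG : (c * Q).natDegree ≤ #s := by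
    have hQ : Q.natDegree ≤ #s - 1 :=
      (natDegree_prod_X_mul_C_sub_one_le (s.erase j) v).trans_eq (card_erase_of_mem hj)
    have := card_pos.mpr ⟨j, hj⟩
    exact natDegree_mul_le.trans (by omega)
  have hdvd : X ^ 2 - 1 ∣ c * Q + nodal s v * (C a * X + C (a * v j)) := by
    have ha : C a * (C (v j) ^ 2 - 1) = 1 := by
      rw [← C_pow, ← C_1, ← C_sub, ← C_mul, inv_mul_cancel₀ (sub_ne_zero.mpr (hv j hj))]
    have e : c * Q + nodal s v * (C a * X + C (a * v j)) =
        (c * Q - M) + (X ^ 2 - 1) * (C a * M) := by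
      rw [nodal_eq_mul_nodal_erase hj, nodal_eq, C_mul]
      linear_combination (-M) * ha
    rw [e]
    exact hcQ.add (dvd_mul_right _ _)
  rw [← sum_eval_div_sq_sub_one_mul_prod_sub hvs ⟨j, hj⟩ hv hG hdvd]
  simp only [Q, eval_mul, eval_prod, eval_sub, eval_X, eval_C, eval_one]

end Lagrange

theorem add_mul_prod_div_div_mul_sub_one {F ι : Type*} [Field F] [DecidableEq ι] {s : Finset ι}
    {v : ι → F} (hvs : Set.InjOn v s) {j k : ι} (hj : j ∈ s) (hk : k ∈ s) (hkj : v k * v j ≠ 1)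
    (hk2 : v k ^ 2 ≠ 1) (e r : F) :
    (e + r * (v k ^ 2 - 1) * ∏ l ∈ s.erase k, v l) *
        (∏ l ∈ s.erase k, (v k * v l - 1) / (v k - v l)) / (v j * v k - 1) =
      e * (∏ l ∈ s.erase j, (v k * v l - 1)) / ((v k ^ 2 - 1) * ∏ l ∈ s.erase k, (v k - v l)) +
        r * ((∏ l ∈ s.erase k, v l) * (∏ l ∈ s.erase j, (v k * v l - 1)) /
          ∏ l ∈ s.erase k, (v k - v l)) := by
  have hswap := (mul_prod_erase _ (fun l ↦ v k * v l - 1) hk).trans (mul_prod_erase _ _ hj).symm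
  have hW : ∏ l ∈ s.erase k, (v k - v l) ≠ 0 := prod_ne_zero_iff.mpr fun l hl ↦
    sub_ne_zero.mpr fun h ↦ (ne_of_mem_erase hl) (hvs (mem_of_mem_erase hl) hk h.symm)
  have hkj' : v k * v j - 1 ≠ 0 := sub_ne_zero.mpr hkj
  have hk2' : v k ^ 2 - 1 ≠ 0 := sub_ne_zero.mpr hk2
  rw [prod_div_distrib]
  field_simp
  linear_combination (e + r * (v k ^ 2 - 1) * ∏ l ∈ s.erase k, v l) * hswap

theorem stmt_1_general {F : Type*} [Field F] {d : ℕ}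
    (q ϱ : F)
    (v : Fin d → F) (hv0 : ∀ i, v i ≠ 0) (hvinj : Function.Injective v)
    (hv1 : ∀ i j, v i * v j ≠ 1)
    (γ : Fin d → F)
    (hγ : ∀ i, γ i =
      ((if Odd d then 1 else -v i) +
          (q - q⁻¹)⁻¹ * ϱ * (v i ^ 2 - 1) * ∏ j ∈ Finset.univ.erase i, v j) *
        ∏ j ∈ Finset.univ.erase i, (v i * v j - 1) / (v i - v j)) :
    ∀ j, ∑ k, γ k / (v j * v k - 1) = (q - q⁻¹)⁻¹ * ϱ + 1 / (v j ^ 2 - 1) := by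
  intro j
  set c : F[X] := if Odd d then 1 else -X
  have hc (x : F) : c.eval x = if Odd d then 1 else -x := by split_ifs <;> simp [c, *]
  have hcdeg : c.natDegree ≤ 1 := by simp only [c]; split_ifs <;> simp
  have hsq (i : Fin d) : v i ^ 2 ≠ 1 := by rw [sq]; exact hv1 i i
  have hcQ := X_sq_sub_one_dvd_ite_mul_prod_sub_prod (univ.erase j) v
    ((card_erase_add_one (mem_univ j)).trans (card_fin d))
  simp_rw [hγ, ← hc]
  rw [sum_congr rfl fun k _ ↦ add_mul_prod_div_div_mul_sub_one hvinj.injOn (mem_univ j)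
      (mem_univ k) (hv1 k j) (hsq k) _ _,
    sum_add_distrib, ← mul_sum,
    Lagrange.sum_eval_mul_prod_div_sq_sub_one_mul_prod_sub hvinj.injOn (fun i _ ↦ hsq i)
      (mem_univ j) hcdeg hcQ,
    Lagrange.sum_prod_erase_mul_prod_div_prod_sub hvinj.injOn (fun i _ ↦ hv0 i) (mem_univ j)]
  ring

/-- With `δ = q − q⁻¹`, pairwise distinct invertible `v₁,…,v_d` with
`vᵢvⱼ ≠ 1`, `ϱ⁻¹ = α·v₁⋯v_d` (`α ∈ {1,−1}` for odd `d`, `α ∈ {q⁻¹,−q}` for even `d`) and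
`γᵢ = (γ_d(vᵢ) + δ⁻¹ϱ(vᵢ² − 1)∏_{j≠i}vⱼ)·∏_{j≠i}(vᵢvⱼ − 1)/(vᵢ − vⱼ)`, one has, for every
`1 ≤ j ≤ d`:  `∑_{k=1}^d γ_k/(vⱼv_k − 1) = δ⁻¹ϱ + 1/(vⱼ² − 1)`. -/
theorem stmt_1 {F : Type*} [Field F] {d : ℕ} (hd : 1 ≤ d)
    (q ϱ α : F) (hq : q ≠ 0) (hδ : q - q⁻¹ ≠ 0) (hϱ : ϱ ≠ 0)
    (v : Fin d → F) (hv0 : ∀ i, v i ≠ 0) (hvinj : Function.Injective v)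
    (hv1 : ∀ i j, v i * v j ≠ 1)
    (hα : if Odd d then α = 1 ∨ α = -1 else α = q⁻¹ ∨ α = -q)
    (hϱα : ϱ⁻¹ = α * ∏ l, v l)
    (γ : Fin d → F)
    (hγ : ∀ i, γ i =
      ((if Odd d then 1 else -v i) +
          (q - q⁻¹)⁻¹ * ϱ * (v i ^ 2 - 1) * ∏ j ∈ Finset.univ.erase i, v j) *
        ∏ j ∈ Finset.univ.erase i, (v i * v j - 1) / (v i - v j)) :
    ∀ j, ∑ k, γ k / (v j * v k - 1) = (q - q⁻¹)⁻¹ * ϱ + 1 / (v j ^ 2 - 1) :=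
  stmt_1_general q ϱ v hv0 hvinj hv1 γ hγ
end

section
/- One has ∑_{i=1}^d γ_i = δ^{-1}·ϱ·(∏_{l=1}^d v_l² − 1) + 1 if d is odd, and ∑_{i=1}^d γ_i = δ^{-1}·ϱ·(∏_{l=1}^d v_l² − 1) + 1 − ∏_{l=1}^d v_l if d is even. (This is the value ω_0 = δ^{-1}ϱ(∏ v_l² − 1) + 1 − ((−1)^d + 1)/2·∏ v_l.) -/
open Finset

namespace Stmt2Aux

variable {F : Type*} [Field F] {ι : Type*} [DecidableEq ι]

private lemma aux1 {w A V : F} (hwA : w - A ≠ 0) :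
    (w * A - 1) / (w - A) * V = A * V + (A ^ 2 - 1) * V / (w - A) := by
  field_simp
  ring

private lemma aux2 {w A u : F} (c : F) (h1 : w - u ≠ 0) (h2 : A - u ≠ 0)
    (hwA : w - A ≠ 0) :
    (w * A - 1) / (w - A) * (c / (w - u))
      = (A ^ 2 - 1) * (c / (A - u)) / (w - A)
        + (u * A - 1) / (u - A) * c / (w - u) := by
  have h3 : u - A ≠ 0 := fun h => h2 (by
    have := sub_eq_zero.mp h
    rw [sub_eq_zero, this])
  field_simp
  ring

/-- Partial fraction expansion of `∏ (w v_j - 1)/(w - v_j)`. -/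
lemma pf (v : ι → F) (s : Finset ι) :
    (∀ i ∈ s, ∀ j ∈ s, v i = v j → i = j) →
    ∀ w : F, (∀ j ∈ s, w ≠ v j) →
    ∏ j ∈ s, (w * v j - 1) / (w - v j) =
      ∏ j ∈ s, v j +
        ∑ i ∈ s, (v i ^ 2 - 1) *
          (∏ j ∈ s.erase i, (v i * v j - 1) / (v i - v j)) / (w - v i) := by
  induction s using Finset.induction_on with
  | empty => intro _ w _; simp
  | @insert a s ha ih =>
    intro hinj w hw
    have hinj' : ∀ i ∈ s, ∀ j ∈ s, v i = v j → i = j := fun i hi j hj =>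
      hinj i (mem_insert_of_mem hi) j (mem_insert_of_mem hj)
    have hwA : w - v a ≠ 0 := sub_ne_zero.mpr (hw a (mem_insert_self a s))
    have hwi : ∀ i ∈ s, w - v i ≠ 0 := fun i hi =>
      sub_ne_zero.mpr (hw i (mem_insert_of_mem hi))
    have hAi : ∀ i ∈ s, v a - v i ≠ 0 := fun i hi => sub_ne_zero.mpr (fun h =>
      ha (by rwa [hinj a (mem_insert_self a s) i (mem_insert_of_mem hi) h]))
    have ihw := ih hinj' w (fun j hj => hw j (mem_insert_of_mem hj))
    have ihA := ih hinj' (v a) (fun j hj => fun h =>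
      ha (by rwa [hinj a (mem_insert_self a s) j (mem_insert_of_mem hj) h]))
    rw [prod_insert ha, prod_insert ha, sum_insert ha, ihw]
    -- rewrite the `a`-residue's product (erase (insert a s) a = s)
    rw [erase_insert ha]
    -- rewrite residues at i ∈ s
    have hTi : ∀ i ∈ s,
        (v i ^ 2 - 1) * (∏ j ∈ (insert a s).erase i, (v i * v j - 1) / (v i - v j)) / (w - v i)
        = (v i ^ 2 - 1) * ((v i * v a - 1) / (v i - v a) *
            ∏ j ∈ s.erase i, (v i * v j - 1) / (v i - v j)) / (w - v i) := by
      intro i hi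
      have hia : i ≠ a := fun h => ha (h ▸ hi)
      rw [erase_insert_of_ne (Ne.symm hia), prod_insert (fun h => ha (mem_of_mem_erase h))]
    rw [sum_congr rfl hTi, ihA]
    rw [mul_add, Finset.mul_sum]
    rw [aux1 hwA]
    have key2 : ∀ i ∈ s,
        (w * v a - 1) / (w - v a) *
          ((v i ^ 2 - 1) * (∏ j ∈ s.erase i, (v i * v j - 1) / (v i - v j)) / (w - v i))
        = (v a ^ 2 - 1) * ((v i ^ 2 - 1) *
              (∏ j ∈ s.erase i, (v i * v j - 1) / (v i - v j)) / (v a - v i)) / (w - v a)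
          + (v i ^ 2 - 1) * ((v i * v a - 1) / (v i - v a) *
              ∏ j ∈ s.erase i, (v i * v j - 1) / (v i - v j)) / (w - v i) := by
      intro i hi
      rw [aux2 _ (hwi i hi) (hAi i hi) hwA]
      ring
    rw [sum_congr rfl key2, Finset.sum_add_distrib]
    rw [mul_add, add_div, Finset.mul_sum, Finset.sum_div]
    ring

end Stmt2Aux
namespace Stmt2Aux

variable {F : Type*} [Field F] {ι : Type*} [DecidableEq ι]

private lemma aux3 {A u : F} (T : F) (h2 : A - u ≠ 0) :
    (u ^ 2 - 1) * T / (A - u) + (u * A - 1) / (u - A) * T = -(u * T) := by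
  have h3 : u - A ≠ 0 := fun h => h2 (by rw [sub_eq_zero, sub_eq_zero.mp h])
  field_simp
  ring

private lemma aux4 {A u : F} (T : F) (h2 : A - u ≠ 0) :
    A * ((u ^ 2 - 1) * T / (A - u)) + u * ((u * A - 1) / (u - A) * T) = -T := by
  have h3 : u - A ≠ 0 := fun h => h2 (by rw [sub_eq_zero, sub_eq_zero.mp h])
  field_simp
  ring

lemma S01 (v : ι → F) (s : Finset ι) :
    (∀ i ∈ s, ∀ j ∈ s, v i = v j → i = j) →
    (∑ i ∈ s, ∏ j ∈ s.erase i, (v i * v j - 1) / (v i - v j)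
        = if Even s.card then 0 else 1) ∧
    (∑ i ∈ s, v i * ∏ j ∈ s.erase i, (v i * v j - 1) / (v i - v j)
        = (∏ j ∈ s, v j) - if Even s.card then 1 else 0) := by
  induction s using Finset.induction_on with
  | empty => intro _; simp
  | @insert a s ha ih =>
    intro hinj
    have hinj' : ∀ i ∈ s, ∀ j ∈ s, v i = v j → i = j := fun i hi j hj =>
      hinj i (mem_insert_of_mem hi) j (mem_insert_of_mem hj)
    obtain ⟨ih0, ih1⟩ := ih hinj'
    have hAi : ∀ i ∈ s, v a - v i ≠ 0 := fun i hi => sub_ne_zero.mpr (fun h =>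
      ha (by rwa [hinj a (mem_insert_self a s) i (mem_insert_of_mem hi) h]))
    have hpfA := pf v s hinj' (v a) (fun j hj h =>
      ha (by rwa [hinj a (mem_insert_self a s) j (mem_insert_of_mem hj) h]))
    have hTi : ∀ i ∈ s,
        ∏ j ∈ (insert a s).erase i, (v i * v j - 1) / (v i - v j)
        = (v i * v a - 1) / (v i - v a) *
            ∏ j ∈ s.erase i, (v i * v j - 1) / (v i - v j) := by
      intro i hi
      have hia : i ≠ a := fun h => ha (h ▸ hi)
      rw [erase_insert_of_ne (Ne.symm hia), prod_insert (fun h => ha (mem_of_mem_erase h))]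
    have hcard : (insert a s).card = s.card + 1 := card_insert_of_notMem ha
    constructor
    · rw [sum_insert ha, erase_insert ha]
      have hsum1 : ∑ i ∈ s, ∏ j ∈ (insert a s).erase i, (v i * v j - 1) / (v i - v j)
          = ∑ i ∈ s, (v i * v a - 1) / (v i - v a) *
              ∏ j ∈ s.erase i, (v i * v j - 1) / (v i - v j) :=
        Finset.sum_congr rfl hTi
      rw [hsum1, hpfA, add_assoc, ← Finset.sum_add_distrib]
      have hsum2 : ∑ i ∈ s,
          (((v i ^ 2 - 1) * ∏ j ∈ s.erase i, (v i * v j - 1) / (v i - v j)) / (v a - v i)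
            + (v i * v a - 1) / (v i - v a) * ∏ j ∈ s.erase i, (v i * v j - 1) / (v i - v j))
          = ∑ i ∈ s, -(v i * ∏ j ∈ s.erase i, (v i * v j - 1) / (v i - v j)) :=
        Finset.sum_congr rfl (fun i hi => aux3 _ (hAi i hi))
      rw [hsum2, Finset.sum_neg_distrib, ih1, hcard]
      rcases Nat.even_or_odd s.card with h | h
      · simp [Nat.even_add_one, h]
        try ring
      · have h' : ¬ Even s.card := Nat.not_even_iff_odd.mpr h
        simp [Nat.even_add_one, h']
        try ring
    · rw [sum_insert ha, erase_insert ha, prod_insert ha]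
      have hsum1 : ∑ i ∈ s, v i * ∏ j ∈ (insert a s).erase i, (v i * v j - 1) / (v i - v j)
          = ∑ i ∈ s, v i * ((v i * v a - 1) / (v i - v a) *
              ∏ j ∈ s.erase i, (v i * v j - 1) / (v i - v j)) :=
        Finset.sum_congr rfl (fun i hi => by rw [hTi i hi])
      rw [hsum1, hpfA, mul_add, Finset.mul_sum, add_assoc, ← Finset.sum_add_distrib]
      have hsum2 : ∑ i ∈ s,
          (v a * (((v i ^ 2 - 1) * ∏ j ∈ s.erase i, (v i * v j - 1) / (v i - v j)) / (v a - v i))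
            + v i * ((v i * v a - 1) / (v i - v a) *
                ∏ j ∈ s.erase i, (v i * v j - 1) / (v i - v j)))
          = ∑ i ∈ s, -(∏ j ∈ s.erase i, (v i * v j - 1) / (v i - v j)) :=
        Finset.sum_congr rfl (fun i hi => aux4 _ (hAi i hi))
      rw [hsum2, Finset.sum_neg_distrib, ih0, hcard]
      rcases Nat.even_or_odd s.card with h | h
      · simp [Nat.even_add_one, h]
        try ring
      · have h' : ¬ Even s.card := Nat.not_even_iff_odd.mpr h
        simp [Nat.even_add_one, h']
        try ring

end Stmt2Aux
/-- In the setting of Proposition 3.2 (see the hypotheses below),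
`∑_{i=1}^d γᵢ = δ⁻¹ϱ(∏_l v_l² − 1) + 1` if `d` is odd, and
`∑_{i=1}^d γᵢ = δ⁻¹ϱ(∏_l v_l² − 1) + 1 − ∏_l v_l` if `d` is even; i.e.
`ω₀ = δ⁻¹ϱ(∏ v_l² − 1) + 1 − ((−1)^d + 1)/2·∏ v_l`. -/
theorem stmt_2 {F : Type*} [Field F] {d : ℕ} (hd : 1 ≤ d)
    (q ϱ α : F) (hq : q ≠ 0) (hδ : q - q⁻¹ ≠ 0) (hϱ : ϱ ≠ 0)
    (v : Fin d → F) (hv0 : ∀ i, v i ≠ 0) (hvinj : Function.Injective v)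
    (hv1 : ∀ i j, v i * v j ≠ 1)
    (hα : if Odd d then α = 1 ∨ α = -1 else α = q⁻¹ ∨ α = -q)
    (hϱα : ϱ⁻¹ = α * ∏ l, v l)
    (γ : Fin d → F)
    (hγ : ∀ i, γ i =
      ((if Odd d then 1 else -v i) +
          (q - q⁻¹)⁻¹ * ϱ * (v i ^ 2 - 1) * ∏ j ∈ Finset.univ.erase i, v j) *
        ∏ j ∈ Finset.univ.erase i, (v i * v j - 1) / (v i - v j)) :
    ∑ i, γ i =
      (q - q⁻¹)⁻¹ * ϱ * ((∏ l, v l) ^ 2 - 1) + 1 -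
        (if Odd d then 0 else ∏ l, v l) := by
  classical
  have hinjU : ∀ i ∈ Finset.univ, ∀ j ∈ (Finset.univ : Finset (Fin d)),
      v i = v j → i = j := fun i _ j _ h => hvinj h
  obtain ⟨hS0, hS1⟩ := Stmt2Aux.S01 v Finset.univ hinjU
  rw [Finset.card_univ, Fintype.card_fin] at hS0 hS1
  have hVne : (∏ l, v l) ≠ 0 := Finset.prod_ne_zero_iff.mpr fun i _ => hv0 i
  -- key: ∑ (v_i^2-1) T_i / v_i = V - V⁻¹ (partial fractions at w = 0)
  have hpf0 := Stmt2Aux.pf v Finset.univ hinjU 0 (fun j _ => Ne.symm (hv0 j))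
  have hL : ∏ x : Fin d, (0 * v x - 1) / (0 - v x) = (∏ l, v l)⁻¹ := by
    rw [← Finset.prod_inv_distrib]
    exact Finset.prod_congr rfl fun x _ => by rw [zero_mul, zero_sub, zero_sub, neg_div_neg_eq, one_div]
  have hR : ∑ i, ((v i ^ 2 - 1) *
        ∏ j ∈ Finset.univ.erase i, (v i * v j - 1) / (v i - v j)) / (0 - v i)
      = -∑ i, ((v i ^ 2 - 1) *
        ∏ j ∈ Finset.univ.erase i, (v i * v j - 1) / (v i - v j)) / v i := by
    rw [← Finset.sum_neg_distrib]
    exact Finset.sum_congr rfl fun i _ => by rw [zero_sub, div_neg]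
  rw [hL, hR] at hpf0
  have hkey : ∑ i, ((v i ^ 2 - 1) *
      ∏ j ∈ Finset.univ.erase i, (v i * v j - 1) / (v i - v j)) / v i
      = (∏ l, v l) - (∏ l, v l)⁻¹ := by
    linear_combination hpf0
  -- product over erase
  have hP : ∀ i : Fin d, ∏ j ∈ Finset.univ.erase i, v j = (∏ l, v l) * (v i)⁻¹ := by
    intro i
    rw [eq_mul_inv_iff_mul_eq₀ (hv0 i), mul_comm]
    exact Finset.mul_prod_erase Finset.univ v (Finset.mem_univ i)
  -- split the sum
  have hγsum : ∑ i, γ i =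
      (∑ i, (if Odd d then 1 else -v i) *
          ∏ j ∈ Finset.univ.erase i, (v i * v j - 1) / (v i - v j))
        + (q - q⁻¹)⁻¹ * ϱ * ((∏ l, v l) *
          ∑ i, ((v i ^ 2 - 1) *
            ∏ j ∈ Finset.univ.erase i, (v i * v j - 1) / (v i - v j)) / v i) := by
    rw [Finset.mul_sum, Finset.mul_sum, ← Finset.sum_add_distrib]
    refine Finset.sum_congr rfl fun i _ => ?_
    rw [hγ i, hP i]
    ring
  rw [hγsum, hkey]
  have hVV : (∏ l, v l) * ((∏ l, v l) - (∏ l, v l)⁻¹) = (∏ l, v l) ^ 2 - 1 := by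
    field_simp
  rw [hVV]
  by_cases hodd : Odd d
  · have heven : ¬ Even d := Nat.not_even_iff_odd.mpr hodd
    simp only [if_pos hodd, one_mul, if_neg heven] at hS0 ⊢
    rw [hS0]
    ring
  · have heven : Even d := Nat.not_odd_iff_even.mp hodd
    simp only [if_neg hodd, if_pos heven] at hS1 ⊢
    have hneg : ∑ i, -v i * ∏ j ∈ Finset.univ.erase i, (v i * v j - 1) / (v i - v j)
        = -∑ i, v i * ∏ j ∈ Finset.univ.erase i, (v i * v j - 1) / (v i - v j) := by
      rw [← Finset.sum_neg_distrib]
      exact Finset.sum_congr rfl fun i _ => by ring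
    rw [hneg, hS1]
    ring
end

section
/- For every integer a ≥ 0: if r is odd then ω_a = ε(a) + δ^{-1}·ϱ·Q_a·P + ∑_{k=0}^{a−1} ε(k)·Q_{a−1−k} − δ^{-1}·ϱ·[a = 0], and if r is even then ω_a = ε(a) + δ^{-1}·ϱ·Q_a·P − ∑_{k=0}^{a} ε(k)·Q_{a−k} − δ^{-1}·ϱ·[a = 0]. Here ε(k) := 1 if k is even and ε(k) := 0 if k is odd, P := u_1⋯u_r, and [a = 0] is 1 if a = 0 and 0 otherwise. -/
/-!
Since `∑ₐ ωₐ yᵃ = ∑ⱼ γⱼ / (1 - uⱼ y)`, the claim is an identity of power series; multiplied by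
`B (1 - y²)`, where `B = ∏ (uᵢ y - 1)` and `A = ∏ (y - uᵢ)`, it becomes an identity of
polynomials. Modulo `1 - y²` one has `uᵢ y - 1 ≡ -y (y - uᵢ)`, so `1 - y²` divides `B + y A`
(`r` odd) resp. `B - A` (`r` even); the quotient, like `P A - B`, has degree `< r`. A polynomial
of degree `< r` is determined by its values at the `r` points `1 / uⱼ`, and evaluating there shows
that `γⱼ` is its coefficient on `∏_{i ≠ j} (uᵢ y - 1)`.
-/

namespace ReciprocalPartialFraction

open Polynomial Finset

section CommRing

variable {R : Type*} [CommRing R] {r : ℕ} (u : Fin r → R)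

noncomputable def numer : R[X] := ∏ i, (X - C (u i))

noncomputable def denom : R[X] := ∏ i, (C (u i) * X - 1)

noncomputable def denomErase (j : Fin r) : R[X] := ∏ i ∈ univ.erase j, (C (u i) * X - 1)

variable (R) in
noncomputable def parityFactor (r : ℕ) : R[X] := if Odd r then X else -1

lemma denom_eq_mul_denomErase (j : Fin r) : denom u = (C (u j) * X - 1) * denomErase u j :=
  (mul_prod_erase _ _ (mem_univ j)).symm

lemma natDegree_C_mul_X_sub_one_le (a : R) : (C a * X - 1 : R[X]).natDegree ≤ 1 := by
  simpa [sub_eq_add_neg] using natDegree_linear_le (a := a) (b := -1)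

lemma natDegree_numer_le : (numer u).natDegree ≤ r :=
  (natDegree_prod_le _ _).trans <| by
    simpa using sum_le_sum fun i (_ : i ∈ univ) => natDegree_X_sub_C_le (u i)

lemma natDegree_denom_le : (denom u).natDegree ≤ r :=
  (natDegree_prod_le _ _).trans <| by
    simpa using sum_le_sum fun i (_ : i ∈ univ) => natDegree_C_mul_X_sub_one_le (u i)

lemma natDegree_denomErase_lt (j : Fin r) : (denomErase u j).natDegree < r :=
  (natDegree_prod_le _ _).trans_lt <| by
    refine (sum_le_sum fun i (_ : i ∈ univ.erase j) =>
      natDegree_C_mul_X_sub_one_le (u i)).trans_lt ?_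
    simpa using j.pos

lemma coeff_numer_self : (numer u).coeff r = 1 := by
  simpa [numer] using coeff_prod_of_natDegree_le (s := univ) (fun i => X - C (u i)) 1
    fun i _ => natDegree_X_sub_C_le (u i)

lemma coeff_denom_self : (denom u).coeff r = ∏ i, u i := by
  simpa [denom, coeff_one] using
    coeff_prod_of_natDegree_le (s := univ) (fun i => C (u i) * X - 1) 1
      fun i _ => natDegree_C_mul_X_sub_one_le (u i)

lemma degree_C_mul_numer_sub_denom_lt : (C (∏ i, u i) * numer u - denom u).degree < r := by
  refine (degree_lt_iff_coeff_zero _ _).2 fun m hm => ?_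
  rw [coeff_sub, coeff_C_mul]
  rcases hm.eq_or_lt with rfl | hm
  · rw [coeff_numer_self, coeff_denom_self, mul_one, sub_self]
  · rw [coeff_eq_zero_of_natDegree_lt ((natDegree_numer_le u).trans_lt hm),
      coeff_eq_zero_of_natDegree_lt ((natDegree_denom_le u).trans_lt hm), mul_zero, sub_zero]

lemma one_sub_X_sq_dvd : (1 - X ^ 2 : R[X]) ∣ denom u + parityFactor R r * numer u := by
  set π := Ideal.Quotient.mk (Ideal.span {(1 - X ^ 2 : R[X])})
  suffices π (denom u + parityFactor R r * numer u) = 0 from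
    (Ideal.Quotient.eq_zero_iff_dvd _ _).1 this
  have hX : π (-X) ^ 2 = 1 := by
    rw [← map_pow, ← map_one π, Ideal.Quotient.eq, Ideal.mem_span_singleton]
    exact ⟨-1, by ring⟩
  have hfactor (i : Fin r) : π (C (u i) * X - 1) = π (-X) * π (X - C (u i)) := by
    rw [← map_mul, Ideal.Quotient.eq, Ideal.mem_span_singleton]
    exact ⟨-1, by ring⟩
  have hdenom : π (denom u) = π (-X) ^ r * π (numer u) := by
    simp only [denom, numer, map_prod, hfactor, prod_mul_distrib, prod_const, card_univ,
      Fintype.card_fin]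
  rw [map_add, map_mul, hdenom, parityFactor]
  rcases Nat.even_or_odd' r with ⟨k, rfl | rfl⟩
  · rw [if_neg (Nat.not_odd_iff_even.2 (even_two_mul k)), pow_mul (π (-X)), hX, one_pow,
      map_neg, map_one]
    ring
  · rw [if_pos (odd_two_mul_add_one k), pow_succ (π (-X)), pow_mul (π (-X)), hX, one_pow,
      map_neg]
    ring

lemma natDegree_denom_add_parityFactor_mul_numer_le :
    (denom u + parityFactor R r * numer u).natDegree ≤ r + 1 := by
  refine natDegree_add_le_of_degree_le ((natDegree_denom_le u).trans (Nat.le_succ r)) ?_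
  refine natDegree_mul_le.trans ?_
  have : (parityFactor R r).natDegree ≤ 1 := by
    unfold parityFactor; split_ifs <;> simp [natDegree_X_le]
  linarith [natDegree_numer_le u]

lemma degree_lt_of_natDegree_one_sub_X_sq_mul_le [IsDomain R] {M : R[X]} {n : ℕ}
    (h : ((1 - X ^ 2) * M).natDegree ≤ n + 1) : M.degree < n := by
  rcases eq_or_ne M 0 with rfl | hM
  · simp
  have h2 : (1 - X ^ 2 : R[X]).natDegree = 2 := by
    rw [natDegree_sub_eq_right_of_natDegree_lt] <;> simp
  rw [natDegree_mul (by rintro h; simp [h] at h2) hM, h2] at h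
  exact degree_le_natDegree.trans_lt (by exact_mod_cast (by omega : M.natDegree < n))

end CommRing

section Field

variable {F : Type*} [Field F] {r : ℕ} {u : Fin r → F}

lemma eval_inv_denomErase_of_ne (hu0 : ∀ i, u i ≠ 0) {j k : Fin r} (hkj : k ≠ j) :
    (denomErase u k).eval (u j)⁻¹ = 0 := by
  rw [denomErase, eval_prod]
  exact prod_eq_zero (mem_erase.2 ⟨hkj.symm, mem_univ j⟩) (by simp [hu0 j])

lemma eq_sum_C_mul_denomErase (hu0 : ∀ i, u i ≠ 0) (huinj : Function.Injective u) {p : F[X]}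
    (hp : p.degree < r) (κ : Fin r → F)
    (hκ : ∀ j, p.eval (u j)⁻¹ = κ j * (denomErase u j).eval (u j)⁻¹) :
    p = ∑ j, C (κ j) * denomErase u j := by
  rw [← sub_eq_zero]
  refine eq_zero_of_degree_lt_of_eval_index_eq_zero (v := fun j => (u j)⁻¹) univ
    (fun i _ j _ h => huinj (inv_injective h)) ?_ fun j _ => ?_
  · rw [card_univ, Fintype.card_fin]
    refine (degree_sub_le _ _).trans_lt (max_lt hp ((degree_sum_le _ _).trans_lt ?_))
    refine (Finset.sup_lt_iff (WithBot.bot_lt_coe r)).2 fun j _ => ?_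
    exact degree_le_natDegree.trans_lt
      (WithBot.coe_lt_coe.2 ((natDegree_C_mul_le _ _).trans_lt (natDegree_denomErase_lt u j)))
  · rw [eval_sub, eval_finsetSum, sum_eq_single j, eval_mul, eval_C, hκ, sub_self]
    · intro k _ hkj
      rw [eval_mul, eval_inv_denomErase_of_ne hu0 hkj, mul_zero]
    · simp

lemma eval_inv_numer (hu0 : ∀ i, u i ≠ 0) (huinj : Function.Injective u) (j : Fin r) :
    (numer u).eval (u j)⁻¹ = ((u j)⁻¹ - u j) *
      (∏ i ∈ univ.erase j, (u j * u i - 1) / (u j - u i)) * (denomErase u j).eval (u j)⁻¹ := by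
  rw [numer, eval_prod, ← mul_prod_erase _ _ (mem_univ j), denomErase, eval_prod, mul_assoc,
    ← prod_mul_distrib]
  refine congrArg₂ _ (by simp) (prod_congr rfl fun i hi => ?_)
  have hij : u j - u i ≠ 0 := sub_ne_zero.2 (huinj.ne (ne_of_mem_erase hi).symm)
  have hu0j := hu0 j
  simp only [eval_sub, eval_X, eval_C, eval_mul, eval_one]
  field_simp
  ring

theorem one_sub_X_sq_mul_sum_C_mul_denomErase_add (hu0 : ∀ i, u i ≠ 0)
    (huinj : Function.Injective u) (hu1 : ∀ i j, u i * u j ≠ 1) (c : F) (γ : Fin r → F)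
    (hγ : ∀ i, γ i =
      ((if Odd r then 1 else -u i) + c * (u i ^ 2 - 1) * ∏ j ∈ univ.erase i, u j) *
        ∏ j ∈ univ.erase i, (u i * u j - 1) / (u i - u j)) :
    (1 - X ^ 2) * (∑ j, C (γ j) * denomErase u j + C c * (C (∏ i, u i) * numer u - denom u)) =
      -(denom u + parityFactor F r * numer u) := by
  obtain ⟨M, hM⟩ := one_sub_X_sq_dvd u
  have hdeg : (M + C c * (C (∏ i, u i) * numer u - denom u)).degree < r := by
    refine (degree_add_le _ _).trans_lt (max_lt ?_ ?_)
    · exact degree_lt_of_natDegree_one_sub_X_sq_mul_le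
        (hM ▸ natDegree_denom_add_parityFactor_mul_numer_le u)
    · rw [← smul_eq_C_mul]
      exact (degree_smul_le _ _).trans_lt (degree_C_mul_numer_sub_denom_lt u)
  have hinterp := eq_sum_C_mul_denomErase hu0 huinj hdeg (fun j => -γ j) fun j => by
    have hx : u j * (u j)⁻¹ = 1 := mul_inv_cancel₀ (hu0 j)
    have hnumer := eval_inv_numer hu0 huinj j
    generalize (u j)⁻¹ = x at hx hnumer ⊢
    have hx2 : 1 - x ^ 2 ≠ 0 := fun h =>
      hu1 j j (by linear_combination (u j) ^ 2 * h + (u j * x + 1) * hx)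
    have hdenom : (denom u).eval x = 0 := by
      rw [denom_eq_mul_denomErase u j, eval_mul]; simp [hx]
    have hMx := congrArg (eval x) hM
    simp only [eval_add, eval_mul, hdenom, zero_add, eval_sub, eval_one, eval_pow, eval_X] at hMx
    -- `M` is only known through `(1 - X ^ 2) * M`, so compare values after multiplying by `1 - x²`
    apply mul_left_cancel₀ hx2
    simp only [eval_add, eval_mul, eval_C, eval_sub, hdenom, sub_zero]
    rw [mul_add, ← hMx, hnumer, hγ, ← mul_prod_erase _ u (mem_univ j), parityFactor]
    set κ := ∏ i ∈ univ.erase j, (u j * u i - 1) / (u j - u i)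
    set P' := ∏ i ∈ univ.erase j, u i
    split_ifs
    · rw [eval_X]
      linear_combination κ * eval x (denomErase u j) * (c * (1 - x ^ 2) * P' - 1) * hx
    · rw [eval_neg, eval_one]
      linear_combination κ * eval x (denomErase u j) * (x + c * (1 - x ^ 2) * P') * hx
  simp only [map_neg, neg_mul, sum_neg_distrib] at hinterp
  rw [hM]
  linear_combination (1 - X ^ 2) * hinterp

end Field

section PowerSeries

variable {R : Type*} [CommRing R]

lemma mk_pow_mul_one_sub_C_mul_X (a : R) :
    PowerSeries.mk (a ^ ·) * (1 - PowerSeries.C a * PowerSeries.X) = 1 := by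
  simpa [PowerSeries.rescale_mk] using
    congrArg (PowerSeries.rescale a) (PowerSeries.mk_one_mul_one_sub_eq_one R)

variable (R) in
noncomputable def evenSeries : PowerSeries R := PowerSeries.mk fun n => if Even n then 1 else 0

lemma evenSeries_mul_one_sub_X_sq : evenSeries R * (1 - PowerSeries.X ^ 2) = 1 := by
  ext n
  rw [mul_sub, mul_one, map_sub, mul_comm, PowerSeries.coeff_one, evenSeries]
  match n with
  | 0 => simp
  | 1 => simp [PowerSeries.coeff_X_pow_mul']
  | n + 2 => simp [PowerSeries.coeff_X_pow_mul, Nat.even_add]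

lemma coeff_evenSeries (n : ℕ) :
    PowerSeries.coeff n (evenSeries R) = if Even n then 1 else 0 :=
  PowerSeries.coeff_mk _ _

lemma coeff_evenSeries_mul (φ : PowerSeries R) (n : ℕ) :
    PowerSeries.coeff n (evenSeries R * φ) =
      ∑ k ∈ range (n + 1), (if Even k then 1 else 0) * PowerSeries.coeff (n - k) φ := by
  rw [PowerSeries.coeff_mul, Nat.sum_antidiagonal_eq_sum_range_succ_mk]
  simp [coeff_evenSeries]

variable {r : ℕ} (u : Fin r → R)

lemma mk_pow_mul_denom (j : Fin r) :
    PowerSeries.mk (u j ^ ·) * (denom u : PowerSeries R) = -(denomErase u j : PowerSeries R) := by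
  rw [denom_eq_mul_denomErase u j, Polynomial.coe_mul, Polynomial.coe_sub, Polynomial.coe_mul,
    coe_C, coe_X, Polynomial.coe_one,
    ← neg_sub, neg_mul, mul_neg, ← mul_assoc, mk_pow_mul_one_sub_C_mul_X, one_mul]

end PowerSeries

section Field

variable {F : Type*} [Field F] {r : ℕ} (u : Fin r → F)

noncomputable def quotientSeries : PowerSeries F :=
  ∏ i, (PowerSeries.X - PowerSeries.C (R := F) (u i)) *
    (PowerSeries.C (R := F) (u i) * PowerSeries.X - 1)⁻¹

lemma quotientSeries_mul_denom :
    quotientSeries u * (denom u : PowerSeries F) = numer u := by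
  simp only [quotientSeries, denom, numer, ← coeToPowerSeries.ringHom_apply, map_prod,
    ← prod_mul_distrib]
  refine prod_congr rfl fun i _ => ?_
  simp only [coeToPowerSeries.ringHom_apply, Polynomial.coe_sub, Polynomial.coe_mul, coe_C,
    coe_X, Polynomial.coe_one]
  rw [mul_assoc, PowerSeries.inv_mul_cancel _ (by simp), mul_one]

lemma denom_ne_zero : denom u ≠ 0 := fun h => by
  simpa [denom, eval_prod] using congrArg (eval 0) h

theorem mk_sum_pow_mul_eq (hu0 : ∀ i, u i ≠ 0) (huinj : Function.Injective u)
    (hu1 : ∀ i j, u i * u j ≠ 1) (c : F) (γ : Fin r → F)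
    (hγ : ∀ i, γ i =
      ((if Odd r then 1 else -u i) + c * (u i ^ 2 - 1) * ∏ j ∈ univ.erase i, u j) *
        ∏ j ∈ univ.erase i, (u i * u j - 1) / (u i - u j)) :
    PowerSeries.mk (fun a => ∑ j, u j ^ a * γ j) =
      evenSeries F + PowerSeries.C c * (PowerSeries.C (∏ i, u i) * quotientSeries u - 1) +
        (parityFactor F r : PowerSeries F) * (evenSeries F * quotientSeries u) := by
  have hpoly := congrArg coeToPowerSeries.ringHom
    (one_sub_X_sq_mul_sum_C_mul_denomErase_add hu0 huinj hu1 c γ hγ)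
  simp only [map_mul, map_add, map_sub, map_neg, map_sum, map_one, map_pow,
    coeToPowerSeries.ringHom_apply, coe_C, coe_X] at hpoly
  have hsum : PowerSeries.mk (fun a => ∑ j, u j ^ a * γ j) =
      ∑ j, PowerSeries.C (γ j) * PowerSeries.mk (u j ^ ·) := by
    ext a; simp [mul_comm]
  have hsum_mul :
      (∑ j, PowerSeries.C (γ j) * PowerSeries.mk (u j ^ ·)) * (denom u : PowerSeries F) =
        -∑ j, PowerSeries.C (γ j) * (denomErase u j : PowerSeries F) := by
    rw [sum_mul, ← sum_neg_distrib]
    exact sum_congr rfl fun j _ => by rw [mul_assoc, mk_pow_mul_denom, mul_neg]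
  have hD : (denom u : PowerSeries F) * (1 - PowerSeries.X ^ 2) ≠ 0 :=
    mul_ne_zero (by exact_mod_cast denom_ne_zero u)
      (right_ne_zero_of_mul_eq_one (evenSeries_mul_one_sub_X_sq (R := F)))
  apply mul_right_cancel₀ hD
  linear_combination ((denom u : PowerSeries F) * (1 - PowerSeries.X ^ 2)) * hsum +
    (1 - PowerSeries.X ^ 2) * hsum_mul -
    (PowerSeries.C c * PowerSeries.C (∏ i, u i) +
      (parityFactor F r : PowerSeries F) * evenSeries F) *
      (1 - PowerSeries.X ^ 2) * quotientSeries_mul_denom u -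
    ((denom u : PowerSeries F) + (parityFactor F r : PowerSeries F) * numer u) *
      evenSeries_mul_one_sub_X_sq (R := F) - hpoly

end Field

end ReciprocalPartialFraction

theorem stmt_5_general {F : Type*} [Field F] {r : ℕ}
    (q ϱ : F)
    (u : Fin r → F) (hu0 : ∀ i, u i ≠ 0) (huinj : Function.Injective u)
    (hu1 : ∀ i j, u i * u j ≠ 1)
    (γ : Fin r → F)
    (hγ : ∀ i, γ i =
      ((if Odd r then 1 else -u i) +
          (q - q⁻¹)⁻¹ * ϱ * (u i ^ 2 - 1) * ∏ j ∈ Finset.univ.erase i, u j) *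
        ∏ j ∈ Finset.univ.erase i, (u i * u j - 1) / (u i - u j))
    (ω : ℤ → F) (hω : ∀ a : ℤ, ω a = ∑ j, u j ^ a * γ j)
    (Q : ℕ → F)
    (hQ : ∀ a : ℕ, Q a = PowerSeries.coeff (R := F) a
      (∏ i, (PowerSeries.X - PowerSeries.C (R := F) (u i)) *
        (PowerSeries.C (R := F) (u i) * PowerSeries.X - 1)⁻¹)) :
    ∀ a : ℕ,
      (Odd r → ω (a : ℤ) =
        (if Even a then 1 else 0) + (q - q⁻¹)⁻¹ * ϱ * Q a * (∏ l, u l) +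
          (∑ k ∈ Finset.range a, (if Even k then (1 : F) else 0) * Q (a - 1 - k)) -
          (if a = 0 then (q - q⁻¹)⁻¹ * ϱ else 0)) ∧
      (Even r → ω (a : ℤ) =
        (if Even a then 1 else 0) + (q - q⁻¹)⁻¹ * ϱ * Q a * (∏ l, u l) -
          (∑ k ∈ Finset.range (a + 1), (if Even k then (1 : F) else 0) * Q (a - k)) -
          (if a = 0 then (q - q⁻¹)⁻¹ * ϱ else 0)) := by
  open ReciprocalPartialFraction in
  intro a
  have hQ' (n : ℕ) : PowerSeries.coeff n (quotientSeries u) = Q n := (hQ n).symm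
  have hconv (n : ℕ) : PowerSeries.coeff n (evenSeries F * quotientSeries u) =
      ∑ k ∈ Finset.range (n + 1), (if Even k then (1 : F) else 0) * Q (n - k) := by
    simp only [coeff_evenSeries_mul, hQ']
  have hseries := congrArg (PowerSeries.coeff a) (mk_sum_pow_mul_eq u hu0 huinj hu1 _ γ hγ)
  simp only [PowerSeries.coeff_mk, map_add, map_sub, PowerSeries.coeff_C_mul,
    PowerSeries.coeff_one, hQ', coeff_evenSeries, ← zpow_natCast, ← hω] at hseries
  refine ⟨fun hodd => ?_, fun heven => ?_⟩
  · rw [parityFactor, if_pos hodd, Polynomial.coe_X] at hseries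
    rcases a with _ | n
    · rw [PowerSeries.coeff_zero_X_mul] at hseries
      simp only [if_pos, Finset.range_zero, Finset.sum_empty] at hseries ⊢
      linear_combination hseries
    · rw [PowerSeries.coeff_succ_X_mul, hconv] at hseries
      simp only [if_neg n.succ_ne_zero, Nat.add_sub_cancel] at hseries ⊢
      linear_combination hseries
  · rw [parityFactor, if_neg (Nat.not_odd_iff_even.2 heven), Polynomial.coe_neg,
      Polynomial.coe_one, neg_one_mul, map_neg, hconv] at hseries
    split_ifs at hseries ⊢ <;> linear_combination hseries

/-- With `ω_a = ∑_j u_j^a γ_j` and `Q_a` the coefficient of `y^a` in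
`∏_i (y − u_i)/(u_i y − 1) ∈ F[[y]]`, for every integer `a ≥ 0`:
if `r` is odd then
`ω_a = ε(a) + δ⁻¹ϱ·Q_a·P + ∑_{k=0}^{a−1} ε(k)·Q_{a−1−k} − δ⁻¹ϱ·[a = 0]`,
and if `r` is even then
`ω_a = ε(a) + δ⁻¹ϱ·Q_a·P − ∑_{k=0}^{a} ε(k)·Q_{a−k} − δ⁻¹ϱ·[a = 0]`,
where `ε(k) = 1` for even `k`, `ε(k) = 0` for odd `k`, and `P = u₁⋯u_r`. -/
theorem stmt_5 {F : Type*} [Field F] {r : ℕ} (hr : 1 ≤ r)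
    (q ϱ α : F) (hq : q ≠ 0) (hδ : q - q⁻¹ ≠ 0) (hϱ : ϱ ≠ 0)
    (u : Fin r → F) (hu0 : ∀ i, u i ≠ 0) (huinj : Function.Injective u)
    (hu1 : ∀ i j, u i * u j ≠ 1)
    (hα : if Odd r then α = 1 ∨ α = -1 else α = q⁻¹ ∨ α = -q)
    (hϱα : ϱ⁻¹ = α * ∏ l, u l)
    (γ : Fin r → F)
    (hγ : ∀ i, γ i =
      ((if Odd r then 1 else -u i) +
          (q - q⁻¹)⁻¹ * ϱ * (u i ^ 2 - 1) * ∏ j ∈ Finset.univ.erase i, u j) *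
        ∏ j ∈ Finset.univ.erase i, (u i * u j - 1) / (u i - u j))
    (ω : ℤ → F) (hω : ∀ a : ℤ, ω a = ∑ j, u j ^ a * γ j)
    (Q : ℕ → F)
    (hQ : ∀ a : ℕ, Q a = PowerSeries.coeff (R := F) a
      (∏ i, (PowerSeries.X - PowerSeries.C (R := F) (u i)) *
        (PowerSeries.C (R := F) (u i) * PowerSeries.X - 1)⁻¹)) :
    ∀ a : ℕ,
      (Odd r → ω (a : ℤ) =
        (if Even a then 1 else 0) + (q - q⁻¹)⁻¹ * ϱ * Q a * (∏ l, u l) +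
          (∑ k ∈ Finset.range a, (if Even k then (1 : F) else 0) * Q (a - 1 - k)) -
          (if a = 0 then (q - q⁻¹)⁻¹ * ϱ else 0)) ∧
      (Even r → ω (a : ℤ) =
        (if Even a then 1 else 0) + (q - q⁻¹)⁻¹ * ϱ * Q a * (∏ l, u l) -
          (∑ k ∈ Finset.range (a + 1), (if Even k then (1 : F) else 0) * Q (a - k)) -
          (if a = 0 then (q - q⁻¹)⁻¹ * ϱ else 0)) :=
  stmt_5_general q ϱ u hu0 huinj hu1 γ hγ ω hω Q hQ
end

section
/- In the formal power series ring F[[t]] the following identity holds: ∑_{a=1}^∞ ω_{−a}·t^a = t²·(1 − t²)^{-1} + δ^{-1}·ϱ − P^{-1}·(δ^{-1}·ϱ·P − h(t))·∏_{l=1}^r (1 − u_l·t)·(1 − u_l^{-1}·t)^{-1}, where P := u_1⋯u_r and h(t) := t·(1 − t²)^{-1} if r is odd, h(t) := −t²·(1 − t²)^{-1} if r is even. (This is the formula for the generating series w̃_{1,−}(y) = ∑_{a≥1} ω_{−a} y^{-a} after substituting y = t^{-1}.) -/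
/-!
Since `ω_{-a} = ∑_j γ_j u_j^{-a}`, the left side is `∑_j γ_j ((1 - t/u_j)⁻¹ - 1)`. Multiplying by
`(1 - t²) Q` with `Q = ∏_l (1 - t/u_l)` turns the claim into a polynomial identity. Modulo `1 - t²`
one has `u⁻¹ - t ≡ -t (1 - u⁻¹ t)`, so after multiplication by `Q` the two terms of the right side
with denominator `1 - t²` add up to a polynomial `W`, and what remains is an identity between
polynomials of degree at most `r`. It therefore suffices to check it at the `r + 1` points
`0, u_1, …, u_r`; at `t = u_j` only the `j`-th partial fraction survives and the identity becomes
the defining formula of `γ_j`.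
-/

open Finset

section Polynomial

open Polynomial

theorem one_sub_X_sq_dvd_X_sq_mul_prod_add {R ι : Type*} [CommRing R] (s : Finset ι)
    (v : ι → R) :
    (1 - X ^ 2 : R[X]) ∣ X ^ 2 * ∏ i ∈ s, (1 - C (v i) * X) +
      (if Odd #s then X else -X ^ 2) * ∏ i ∈ s, (C (v i) - X) := by
  set f : R[X] := 1 - X ^ 2
  rw [← AdjoinRoot.mk_eq_zero]
  have hρ : AdjoinRoot.root f ^ 2 = 1 := by
    have := AdjoinRoot.mk_self (f := f)
    simp only [f, map_sub, map_one, map_pow, AdjoinRoot.mk_X] at this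
    exact (sub_eq_zero.mp this).symm
  -- Modulo `1 - X²`, `X` is its own inverse, so `v - X = -X (1 - v X)`.
  have hfactor : ∀ i, AdjoinRoot.mk f (C (v i) - X) =
      -AdjoinRoot.root f * AdjoinRoot.mk f (1 - C (v i) * X) := by
    intro i
    simp only [map_sub, map_one, map_mul, AdjoinRoot.mk_C, AdjoinRoot.mk_X]
    linear_combination -(AdjoinRoot.of f (v i)) * hρ
  simp only [map_add, map_mul, map_prod, hfactor, prod_mul_distrib, prod_const, map_pow,
    apply_ite (AdjoinRoot.mk f), map_neg, AdjoinRoot.mk_X]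
  rcases Nat.even_or_odd #s with ⟨k, hk⟩ | ⟨k, hk⟩
  · rw [if_neg (Nat.not_odd_iff_even.mpr ⟨k, hk⟩), hk, ← two_mul, pow_mul, neg_sq, hρ, one_pow]
    ring
  · have hneg : (-AdjoinRoot.root f) ^ (2 * k + 1) = -AdjoinRoot.root f := by
      rw [pow_succ, pow_mul, neg_sq, hρ, one_pow, one_mul]
    rw [if_pos ⟨k, hk⟩, hk, hneg]
    ring

theorem natDegree_prod_le_card {R ι : Type*} [CommSemiring R] (s : Finset ι) (f : ι → R[X])
    (h : ∀ i ∈ s, (f i).natDegree ≤ 1) : (∏ i ∈ s, f i).natDegree ≤ #s :=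
  (natDegree_prod_le s f).trans <| (sum_le_card_nsmul s _ 1 h).trans_eq (by simp)

theorem natDegree_le_of_natDegree_one_sub_X_sq_mul_le {R : Type*} [CommRing R] [IsDomain R]
    {W : R[X]} {n : ℕ} (h : ((1 - X ^ 2) * W).natDegree ≤ n + 2) : W.natDegree ≤ n := by
  rcases eq_or_ne W 0 with rfl | hW
  · simp
  have h2 : (1 - X ^ 2 : R[X]).natDegree = 2 := by compute_degree!
  rw [natDegree_mul (ne_zero_of_natDegree_gt (n := 0) (by omega)) hW, h2] at h
  omega

variable {K ι : Type*} [Field K]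

theorem eval_prod_one_sub_C_inv_mul_X_of_mem {u : ι → K} {j : ι} (hj : u j ≠ 0) {s : Finset ι}
    (hs : j ∈ s) : (∏ l ∈ s, (1 - C (u l)⁻¹ * X)).eval (u j) = 0 := by
  rw [eval_prod]
  exact prod_eq_zero hs (by simp [hj])

variable [Fintype ι]

theorem eq_zero_of_natDegree_le_card_of_eval_eq_zero {p : K[X]} {u : ι → K}
    (hu0 : ∀ i, u i ≠ 0) (hu : Function.Injective u) (hdeg : p.natDegree ≤ Fintype.card ι)
    (h0 : p.eval 0 = 0) (hroot : ∀ i, p.eval (u i) = 0) : p = 0 := by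
  refine eq_zero_of_natDegree_lt_card_of_eval_eq_zero p (f := fun o : Option ι => o.elim 0 u)
    ?_ ?_ ?_
  · rintro (_ | i) (_ | j) h
    · rfl
    · exact absurd h.symm (hu0 j)
    · exact absurd h (hu0 i)
    · exact congrArg some (hu h)
  · rintro (_ | i)
    exacts [h0, hroot i]
  · rw [Fintype.card_option]
    exact Nat.lt_succ_of_le hdeg

variable [DecidableEq ι]

theorem mul_prod_sub_eq_of_eq_mul_prod_div {u γ : ι → K} (hu : Function.Injective u) {c : K}
    {j : ι} (hγ : γ j = c * ∏ l ∈ univ.erase j, (u j * u l - 1) / (u j - u l)) :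
    γ j * ∏ l ∈ univ.erase j, (u l - u j) = c * ∏ l ∈ univ.erase j, (1 - u j * u l) := by
  rw [hγ, mul_assoc, ← prod_mul_distrib]
  refine congrArg _ (prod_congr rfl fun l hl => ?_)
  have hjl : u j - u l ≠ 0 := sub_ne_zero.mpr fun h => (ne_of_mem_erase hl) (hu h).symm
  field_simp
  ring

theorem eval_sum_C_mul_prod_erase_sub_prod {u : ι → K} (γ : ι → K) {j : ι} (hj : u j ≠ 0) :
    (∑ i, C (γ i) * (∏ l ∈ univ.erase i, (1 - C (u l)⁻¹ * X) - ∏ l, (1 - C (u l)⁻¹ * X))).eval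
        (u j) = γ j * ∏ l ∈ univ.erase j, (1 - (u l)⁻¹ * u j) := by
  rw [eval_finsetSum, sum_eq_single j]
  · simp [eval_prod_one_sub_C_inv_mul_X_of_mem hj (mem_univ j), eval_prod]
  · intro i _ hij
    rw [eval_mul, eval_sub, eval_prod_one_sub_C_inv_mul_X_of_mem hj (mem_univ j),
      eval_prod_one_sub_C_inv_mul_X_of_mem hj (mem_erase.mpr ⟨Ne.symm hij, mem_univ j⟩)]
    ring
  · simp

theorem eval_eq_of_X_sq_mul_prod_add_eq {u : ι → K} {W : K[X]}
    (hW : X ^ 2 * ∏ l, (1 - C (u l)⁻¹ * X) +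
      (if Odd (Fintype.card ι) then X else -X ^ 2) * ∏ l, (C (u l)⁻¹ - X) = (1 - X ^ 2) * W)
    {j : ι} (hj0 : u j ≠ 0) (hj1 : u j ^ 2 ≠ 1) :
    W.eval (u j) =
      (if Odd (Fintype.card ι) then 1 else -u j) * ∏ l ∈ univ.erase j, ((u l)⁻¹ - u j) := by
  have h := congrArg (eval (u j)) hW
  rw [eval_add, eval_mul, eval_mul, eval_prod_one_sub_C_inv_mul_X_of_mem hj0 (mem_univ j),
    eval_prod, ← mul_prod_erase _ _ (mem_univ j)] at h
  simp only [eval_sub, eval_C, eval_X, eval_mul, eval_one, eval_pow] at h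
  have hg : (if Odd (Fintype.card ι) then X else -X ^ 2 : K[X]).eval (u j) * ((u j)⁻¹ - u j) =
      (if Odd (Fintype.card ι) then 1 else -u j) * (1 - u j ^ 2) := by
    split_ifs <;> simp only [eval_X, eval_neg, eval_pow] <;> field_simp [hj0]
  apply mul_left_cancel₀ (sub_ne_zero.mpr hj1.symm)
  linear_combination -h + (∏ l ∈ univ.erase j, ((u l)⁻¹ - u j)) * hg

theorem eval_sum_sub_C_mul_sub_eq_zero (e : K) {u : ι → K} (hu0 : ∀ i, u i ≠ 0) (γ : ι → K)
    {W : K[X]}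
    (hW : X ^ 2 * ∏ l, (1 - C (u l)⁻¹ * X) +
      (if Odd (Fintype.card ι) then X else -X ^ 2) * ∏ l, (C (u l)⁻¹ - X) = (1 - X ^ 2) * W)
    {j : ι} (hj1 : u j ^ 2 ≠ 1)
    (hγ : γ j * ∏ l ∈ univ.erase j, (u l - u j) =
      ((if Odd (Fintype.card ι) then 1 else -u j) + e * (u j ^ 2 - 1) * ∏ l ∈ univ.erase j, u l) *
        ∏ l ∈ univ.erase j, (1 - u j * u l)) :
    (∑ i, C (γ i) * (∏ l ∈ univ.erase i, (1 - C (u l)⁻¹ * X) - ∏ l, (1 - C (u l)⁻¹ * X)) -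
        C e * (∏ l, (1 - C (u l)⁻¹ * X) - ∏ l, (1 - C (u l) * X)) - W).eval (u j) = 0 := by
  set x := u j
  set s := univ.erase j
  have hM : (∏ l, (1 - C (u l) * X)).eval x = (1 - x ^ 2) * ∏ l ∈ s, (1 - x * u l) := by
    rw [eval_prod, ← mul_prod_erase _ _ (mem_univ j)]
    simp only [eval_sub, eval_one, eval_mul, eval_C, eval_X, sq]
    exact congrArg _ (prod_congr rfl fun l _ => by rw [mul_comm])
  have hdiff : (∏ l ∈ s, (1 - (u l)⁻¹ * x)) * ∏ l ∈ s, u l = ∏ l ∈ s, (u l - x) := by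
    rw [← prod_mul_distrib]
    exact prod_congr rfl fun l _ => by field_simp [hu0 l]
  have hinv : (∏ l ∈ s, ((u l)⁻¹ - x)) * ∏ l ∈ s, u l = ∏ l ∈ s, (1 - x * u l) := by
    rw [← prod_mul_distrib]
    exact prod_congr rfl fun l _ => by field_simp [hu0 l]
  rw [eval_sub, eval_sub, eval_mul, eval_C, eval_sub, eval_sum_C_mul_prod_erase_sub_prod γ (hu0 j),
    eval_prod_one_sub_C_inv_mul_X_of_mem (hu0 j) (mem_univ j), hM,
    eval_eq_of_X_sq_mul_prod_add_eq hW (hu0 j) hj1]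
  -- after clearing the denominator `∏_{l ≠ j} u_l`, this is `hγ`
  apply mul_right_cancel₀ (prod_ne_zero_iff.mpr fun l _ => hu0 l : ∏ l ∈ s, u l ≠ 0)
  linear_combination γ j * hdiff - (if Odd (Fintype.card ι) then 1 else -x) * hinv + hγ

theorem one_sub_X_sq_mul_sum_eq (e : K) {u : ι → K} (hu0 : ∀ i, u i ≠ 0)
    (hu : Function.Injective u) (hu1 : ∀ i, u i ^ 2 ≠ 1) (γ : ι → K)
    (hγ : ∀ j, γ j * ∏ l ∈ univ.erase j, (u l - u j) =
      ((if Odd (Fintype.card ι) then 1 else -u j) + e * (u j ^ 2 - 1) * ∏ l ∈ univ.erase j, u l) *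
        ∏ l ∈ univ.erase j, (1 - u j * u l)) :
    (1 - X ^ 2) * ∑ j, C (γ j) *
        (∏ l ∈ univ.erase j, (1 - C (u l)⁻¹ * X) - ∏ l, (1 - C (u l)⁻¹ * X)) =
      X ^ 2 * ∏ l, (1 - C (u l)⁻¹ * X) +
        C e * (1 - X ^ 2) * (∏ l, (1 - C (u l)⁻¹ * X) - ∏ l, (1 - C (u l) * X)) +
        (if Odd (Fintype.card ι) then X else -X ^ 2) * ∏ l, (C (u l)⁻¹ - X) := by
  obtain ⟨W, hW⟩ := one_sub_X_sq_dvd_X_sq_mul_prod_add univ (fun l => (u l)⁻¹)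
  rw [card_univ] at hW
  set Q : K[X] := ∏ l, (1 - C (u l)⁻¹ * X)
  set M : K[X] := ∏ l, (1 - C (u l) * X)
  set g : K[X] := if Odd (Fintype.card ι) then X else -X ^ 2
  set B : K[X] := ∏ l, (C (u l)⁻¹ - X)
  set L : K[X] := ∑ j, C (γ j) * (∏ l ∈ univ.erase j, (1 - C (u l)⁻¹ * X) - Q)
  suffices hD : L - C e * (Q - M) - W = 0 by linear_combination (1 - X ^ 2) * hD - hW
  have hlin : ∀ a : K, (1 - C a * X).natDegree ≤ 1 := fun a => by compute_degree
  have hQ : Q.natDegree ≤ Fintype.card ι := natDegree_prod_le_card _ _ fun l _ => hlin _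
  have hM : M.natDegree ≤ Fintype.card ι := natDegree_prod_le_card _ _ fun l _ => hlin _
  have hL : L.natDegree ≤ Fintype.card ι := by
    refine natDegree_sum_le_of_forall_le _ _ fun j _ => (natDegree_C_mul_le _ _).trans ?_
    refine (natDegree_sub_le _ _).trans (max_le ?_ hQ)
    exact (natDegree_prod_le_card _ _ fun l _ => hlin _).trans (card_le_univ _)
  have hWdeg : W.natDegree ≤ Fintype.card ι := by
    refine natDegree_le_of_natDegree_one_sub_X_sq_mul_le (hW ▸ ?_)
    have hg : g.natDegree ≤ 2 := by unfold g; split_ifs <;> compute_degree!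
    have hB : B.natDegree ≤ Fintype.card ι :=
      (natDegree_prod_le_card _ _ fun l _ => by compute_degree).trans_eq card_univ
    refine (natDegree_add_le _ _).trans (max_le ?_ ?_) <;> refine natDegree_mul_le.trans ?_
    · rw [natDegree_X_pow]; omega
    · omega
  refine eq_zero_of_natDegree_le_card_of_eval_eq_zero hu0 hu ?_ ?_ fun j => ?_
  · refine (natDegree_sub_le _ _).trans (max_le ((natDegree_sub_le _ _).trans (max_le hL ?_)) hWdeg)
    exact (natDegree_C_mul_le _ _).trans ((natDegree_sub_le _ _).trans (max_le hQ hM))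
  · have hW0 : W.eval 0 = 0 := by
      simpa [g, apply_ite (eval (0 : K))] using (congrArg (eval 0) hW).symm
    simp [L, Q, M, eval_finsetSum, eval_prod, hW0]
  · exact eval_sum_sub_C_mul_sub_eq_zero e hu0 γ hW (hu1 j) (hγ j)

end Polynomial

section PowerSeries

open PowerSeries

theorem PowerSeries.mk_pow_mul_one_sub_C_mul_X {R : Type*} [CommRing R] (c : R) :
    PowerSeries.mk (c ^ ·) * (1 - PowerSeries.C c * PowerSeries.X) = 1 := by
  simpa [rescale_mk, rescale_X] using congrArg (rescale c) (mk_one_mul_one_sub_eq_one R)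

variable {K ι : Type*} [Field K] [Fintype ι]

theorem mul_one_sub_X_sq_mul_prod_eq (e : K) {u : ι → K} (hu0 : ∀ i, u i ≠ 0) :
    (X ^ 2 * (1 - X ^ 2)⁻¹ + C e -
        C (∏ l, u l)⁻¹ * (C (e * ∏ l, u l) -
          (if Odd (Fintype.card ι) then X * (1 - X ^ 2)⁻¹ else -(X ^ 2 * (1 - X ^ 2)⁻¹))) *
          ∏ l, (1 - C (u l) * X) * (1 - C (u l)⁻¹ * X)⁻¹) *
        ((1 - X ^ 2) * ∏ l, (1 - C (u l)⁻¹ * X)) =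
      X ^ 2 * ∏ l, (1 - C (u l)⁻¹ * X) +
        C e * (1 - X ^ 2) * (∏ l, (1 - C (u l)⁻¹ * X) - ∏ l, (1 - C (u l) * X)) +
        (if Odd (Fintype.card ι) then X else -X ^ 2) * ∏ l, (C (u l)⁻¹ - X) := by
  have hA : (1 - X ^ 2 : K⟦X⟧) * (1 - X ^ 2)⁻¹ = 1 := PowerSeries.mul_inv_cancel _ (by simp)
  have hQ : (∏ l, (1 - C (u l) * X) * (1 - C (u l)⁻¹ * X)⁻¹) * ∏ l, (1 - C (u l)⁻¹ * X) =
      ∏ l, (1 - C (u l) * X) := by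
    rw [← prod_mul_distrib]
    refine prod_congr rfl fun l _ => ?_
    rw [mul_assoc, PowerSeries.inv_mul_cancel _ (by simp), mul_one]
  have hB : C (∏ l, u l)⁻¹ * ∏ l, (1 - C (u l) * X) = ∏ l, (C (u l)⁻¹ - X) := by
    rw [← prod_inv_distrib, map_prod, ← prod_mul_distrib]
    refine prod_congr rfl fun l _ => ?_
    rw [mul_sub, mul_one, ← mul_assoc, ← map_mul, inv_mul_cancel₀ (hu0 l), map_one, one_mul]
  have hP : C (∏ l, u l)⁻¹ * C (e * ∏ l, u l) = C e := by
    rw [← map_mul, mul_comm e, inv_mul_cancel_left₀ (prod_ne_zero_iff.mpr fun l _ => hu0 l)]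
  set A : K⟦X⟧ := 1 - X ^ 2
  set R := ∏ l, (1 - C (u l) * X) * (1 - C (u l)⁻¹ * X)⁻¹
  set Q := ∏ l, (1 - C (u l)⁻¹ * X)
  split_ifs
  · linear_combination (X ^ 2 * Q + C (∏ l, u l)⁻¹ * X * R * Q) * hA - A * R * Q * hP
      - C e * A * hQ + X * C (∏ l, u l)⁻¹ * hQ + X * hB
  · linear_combination (X ^ 2 * Q - C (∏ l, u l)⁻¹ * X ^ 2 * R * Q) * hA - A * R * Q * hP
      - C e * A * hQ - X ^ 2 * C (∏ l, u l)⁻¹ * hQ - X ^ 2 * hB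

variable [DecidableEq ι]

theorem mk_sum_zpow_neg_mul_prod (u γ : ι → K) :
    mk (fun a : ℕ => if a = 0 then 0 else ∑ j, u j ^ (-(a : ℤ)) * γ j) *
        ∏ l, (1 - C (u l)⁻¹ * X) =
      ∑ j, C (γ j) * (∏ l ∈ univ.erase j, (1 - C (u l)⁻¹ * X) - ∏ l, (1 - C (u l)⁻¹ * X)) := by
  have hgeom : mk (fun a : ℕ => if a = 0 then 0 else ∑ j, u j ^ (-(a : ℤ)) * γ j) =
      ∑ j, C (γ j) * (mk ((u j)⁻¹ ^ ·) - 1) := by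
    ext a
    rcases eq_or_ne a 0 with rfl | ha
    · simp
    · simp [ha, coeff_one, mul_comm]
  rw [hgeom, sum_mul]
  refine sum_congr rfl fun j _ => ?_
  rw [← mul_prod_erase _ _ (mem_univ j), mul_assoc, sub_mul, ← mul_assoc,
    mk_pow_mul_one_sub_C_mul_X]
  ring

end PowerSeries

theorem stmt_8_general {F : Type*} [Field F] {r : ℕ}
    (q ϱ : F)
    (u : Fin r → F) (hu0 : ∀ i, u i ≠ 0) (huinj : Function.Injective u)
    (hu1 : ∀ i j, u i * u j ≠ 1)
    (γ : Fin r → F)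
    (hγ : ∀ i, γ i =
      ((if Odd r then 1 else -u i) +
          (q - q⁻¹)⁻¹ * ϱ * (u i ^ 2 - 1) * ∏ j ∈ Finset.univ.erase i, u j) *
        ∏ j ∈ Finset.univ.erase i, (u i * u j - 1) / (u i - u j))
    (ω : ℤ → F) (hω : ∀ a : ℤ, ω a = ∑ j, u j ^ a * γ j) :
    PowerSeries.mk (fun a : ℕ => if a = 0 then 0 else ω (-(a : ℤ))) =
      PowerSeries.X ^ 2 * (1 - PowerSeries.X ^ 2)⁻¹ +
        PowerSeries.C ((q - q⁻¹)⁻¹ * ϱ) -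
        PowerSeries.C ((∏ l, u l)⁻¹) *
          (PowerSeries.C ((q - q⁻¹)⁻¹ * ϱ * ∏ l, u l) -
            (if Odd r then PowerSeries.X * (1 - PowerSeries.X ^ 2)⁻¹
              else -(PowerSeries.X ^ 2 * (1 - PowerSeries.X ^ 2)⁻¹))) *
          ∏ l, (1 - PowerSeries.C (u l) * PowerSeries.X) *
            (1 - PowerSeries.C ((u l)⁻¹) * PowerSeries.X)⁻¹ := by
  set e := (q - q⁻¹)⁻¹ * ϱ
  have hγ' (j : Fin r) := mul_prod_sub_eq_of_eq_mul_prod_div huinj (hγ j)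
  have hpoly := congrArg (Polynomial.coeToPowerSeries.ringHom (R := F))
    (one_sub_X_sq_mul_sum_eq e hu0 huinj (fun i => by simpa [sq] using hu1 i i) γ
      (by simpa only [Fintype.card_fin] using hγ'))
  simp only [Fintype.card_fin, map_mul, map_add, map_sub, map_sum, map_prod, map_pow, map_one,
    map_neg, apply_ite (Polynomial.coeToPowerSeries.ringHom (R := F))] at hpoly
  have hrhs := mul_one_sub_X_sq_mul_prod_eq e hu0
  simp only [Fintype.card_fin] at hrhs
  simp_rw [hω]
  refine mul_right_cancel₀ (b := (1 - PowerSeries.X ^ 2) *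
    ∏ l, (1 - PowerSeries.C (u l)⁻¹ * PowerSeries.X))
    (fun h => by simpa using congrArg PowerSeries.constantCoeff h) ?_
  rw [mul_left_comm, mk_sum_zpow_neg_mul_prod, hrhs]
  simpa using hpoly

/-- In `F[[t]]`:
`∑_{a≥1} ω_{−a} t^a = t²(1 − t²)⁻¹ + δ⁻¹ϱ − P⁻¹(δ⁻¹ϱP − h(t))·∏_l (1 − u_l t)(1 − u_l⁻¹t)⁻¹`,
with `P = u₁⋯u_r` and `h(t) = t(1 − t²)⁻¹` if `r` is odd, `h(t) = −t²(1 − t²)⁻¹` if `r` is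
even.  (The generating series `w̃₁₋(y) = ∑_{a≥1} ω_{−a} y^{−a}` with `y = t⁻¹`.) -/
theorem stmt_8 {F : Type*} [Field F] {r : ℕ} (hr : 1 ≤ r)
    (q ϱ α : F) (hq : q ≠ 0) (hδ : q - q⁻¹ ≠ 0) (hϱ : ϱ ≠ 0)
    (u : Fin r → F) (hu0 : ∀ i, u i ≠ 0) (huinj : Function.Injective u)
    (hu1 : ∀ i j, u i * u j ≠ 1)
    (hα : if Odd r then α = 1 ∨ α = -1 else α = q⁻¹ ∨ α = -q)
    (hϱα : ϱ⁻¹ = α * ∏ l, u l)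
    (γ : Fin r → F)
    (hγ : ∀ i, γ i =
      ((if Odd r then 1 else -u i) +
          (q - q⁻¹)⁻¹ * ϱ * (u i ^ 2 - 1) * ∏ j ∈ Finset.univ.erase i, u j) *
        ∏ j ∈ Finset.univ.erase i, (u i * u j - 1) / (u i - u j))
    (ω : ℤ → F) (hω : ∀ a : ℤ, ω a = ∑ j, u j ^ a * γ j) :
    PowerSeries.mk (fun a : ℕ => if a = 0 then 0 else ω (-(a : ℤ))) =
      PowerSeries.X ^ 2 * (1 - PowerSeries.X ^ 2)⁻¹ +
        PowerSeries.C ((q - q⁻¹)⁻¹ * ϱ) -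
        PowerSeries.C ((∏ l, u l)⁻¹) *
          (PowerSeries.C ((q - q⁻¹)⁻¹ * ϱ * ∏ l, u l) -
            (if Odd r then PowerSeries.X * (1 - PowerSeries.X ^ 2)⁻¹
              else -(PowerSeries.X ^ 2 * (1 - PowerSeries.X ^ 2)⁻¹))) *
          ∏ l, (1 - PowerSeries.C (u l) * PowerSeries.X) *
            (1 - PowerSeries.C ((u l)⁻¹) * PowerSeries.X)⁻¹ :=
  stmt_8_general q ϱ u hu0 huinj hu1 γ hγ ω hω
end

section
/- Let λ be an r-multipartition of n − 2f, where 0 ≤ f ≤ ⌊n/2⌋, and let s, t ∈ T^{ud}_n(λ). Then: (a) s = t if and only if c_s(k) = c_t(k) for all 1 ≤ k ≤ n; (b) c_s(k) ≠ c_s(k+1) for all 1 ≤ k < n; (c) if s_{k−1} = s_{k+1} then c_s(k) ≠ c_t(k) and c_s(k) ≠ c_t(k)^{-1} whenever t ~_k s and t ≠ s; (d) c_t(k) ∉ {q, −q, q^{-1}, −q^{-1}} for all 1 ≤ k ≤ n. -/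
/-- A partition: a weakly decreasing sequence of non-negative integers that is
eventually zero (rows are indexed from `0`). -/
structure PartitionSeq where
  part : ℕ → ℕ
  antitone : Antitone part
  eventually_zero : ∃ N, ∀ i, N ≤ i → part i = 0

/-- The empty partition. -/
def emptyPartitionSeq : PartitionSeq :=
  ⟨fun _ => 0, fun _ _ _ => le_rfl, ⟨0, fun _ _ => rfl⟩⟩

/-- `mu` is obtained from `lam` by adding one box in row `i` (zero-based) of
component `s`. -/
def AddBoxAt {r : ℕ} (lam mu : Fin r → PartitionSeq) (s : Fin r) (i : ℕ) : Prop :=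
  (mu s).part i = (lam s).part i + 1 ∧
  (∀ i', i' ≠ i → (mu s).part i' = (lam s).part i') ∧
  (∀ s', s' ≠ s → mu s' = lam s')

/-- `t` is an `n`-updown `lam`-tableau: a sequence of `r`-multipartitions starting at
the empty multipartition, ending at `lam`, in which each term is obtained from the
previous one by adding or removing exactly one node. -/
def IsUpDownTableau {r : ℕ} (n : ℕ) (lam : Fin r → PartitionSeq)
    (t : ℕ → Fin r → PartitionSeq) : Prop :=
  t 0 = (fun _ => emptyPartitionSeq) ∧ t n = lam ∧
  ∀ k, k < n →
    (∃ s i, AddBoxAt (t k) (t (k + 1)) s i) ∨ (∃ s i, AddBoxAt (t (k + 1)) (t k) s i)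

/-- `c (k+1)` is the content `c_t(k+1)` of `k+1` in the updown tableau `t`:
`u_s·q^{2(j−i)}` if `t_{k+1} = t_k ∪ {(i,j,s)}` and `u_s⁻¹·q^{−2(j−i)}` if
`t_{k+1} = t_k ∖ {(i,j,s)}`. -/
def IsContent {F : Type*} [Field F] {r : ℕ} (q : F) (u : Fin r → F)
    (t : ℕ → Fin r → PartitionSeq) (c : ℕ → F) : Prop :=
  ∀ k : ℕ,
    (∀ s i, AddBoxAt (t k) (t (k + 1)) s i →
      c (k + 1) = u s * q ^ (2 * (((t k s).part i : ℤ) - (i : ℤ)))) ∧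
    (∀ s i, AddBoxAt (t (k + 1)) (t k) s i →
      c (k + 1) = (u s)⁻¹ * q ^ (-2 * (((t (k + 1) s).part i : ℤ) - (i : ℤ))))

lemma aux_partitionSeq_ext {p q : PartitionSeq} (h : p.part = q.part) : p = q := by
  cases p; cases q; simp_all

lemma aux_diag_strictAnti (p : PartitionSeq) {i i' : ℕ} (h : i < i') :
    (p.part i' : ℤ) - i' < (p.part i : ℤ) - i := by
  have := p.antitone h.le
  omega

lemma aux_diag_inj (p : PartitionSeq) {i i' : ℕ}
    (h : (p.part i : ℤ) - i = (p.part i' : ℤ) - i') : i = i' := by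
  rcases lt_trichotomy i i' with hh | hh | hh
  · exact absurd h (ne_of_gt (aux_diag_strictAnti p hh))
  · exact hh
  · exact absurd h (ne_of_lt (aux_diag_strictAnti p hh))

lemma aux_addBoxAt_right_unique {r : ℕ} {A B B' : Fin r → PartitionSeq} {s : Fin r} {i : ℕ}
    (h : AddBoxAt A B s i) (h' : AddBoxAt A B' s i) : B = B' := by
  funext s'
  by_cases hs : s' = s
  · subst hs
    apply aux_partitionSeq_ext
    funext j
    by_cases hj : j = i
    · subst hj; rw [h.1, h'.1]
    · rw [h.2.1 j hj, h'.2.1 j hj]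
  · rw [h.2.2 s' hs, h'.2.2 s' hs]

lemma aux_addBoxAt_left_unique {r : ℕ} {A B B' : Fin r → PartitionSeq} {s : Fin r} {i : ℕ}
    (h : AddBoxAt B A s i) (h' : AddBoxAt B' A s i) : B = B' := by
  funext s'
  by_cases hs : s' = s
  · subst hs
    apply aux_partitionSeq_ext
    funext j
    by_cases hj : j = i
    · subst hj
      have e1 := h.1; have e2 := h'.1
      omega
    · have e1 := h.2.1 j hj; have e2 := h'.2.1 j hj
      omega
  · rw [← h.2.2 s' hs, ← h'.2.2 s' hs]

/-- C4: if `g` is `p` plus a box in row `i` (and `g` is a partition), then the diagonal of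
the added box differs from the diagonal `p.part i' - 1 - i'` of any box removable from `p`. -/
lemma aux_add_remove_diag_ne (p g : PartitionSeq) (i : ℕ)
    (hgi : g.part i = p.part i + 1) (hgj : ∀ j, j ≠ i → g.part j = p.part j)
    (i' : ℕ) : (p.part i : ℤ) - i ≠ (p.part i' : ℤ) - 1 - i' := by
  rcases lt_trichotomy i i' with h | h | h
  · have := aux_diag_strictAnti p h; omega
  · subst h; omega
  · -- i' < i, hence i ≥ 1
    have h1 : p.part (i-1) ≤ p.part i' := p.antitone (by omega)
    have h2 : g.part i ≤ g.part (i-1) := g.antitone (by omega)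
    rw [hgj (i-1) (by omega), hgi] at h2
    omega

/-- Size bound invariant: every nonzero part of `t k` satisfies `part i + i ≤ k`. -/
lemma aux_part_bound {r n : ℕ} {lam : Fin r → PartitionSeq} {t : ℕ → Fin r → PartitionSeq}
    (ht : IsUpDownTableau n lam t) :
    ∀ k, k ≤ n → ∀ s i, (t k s).part i ≠ 0 → (t k s).part i + i ≤ k := by
  intro k
  induction k with
  | zero =>
    intro _ s i hi
    rw [ht.1] at hi
    exact absurd rfl hi
  | succ k ih =>
    intro hk s i hi
    have hk' : k < n := by omega
    rcases ht.2.2 k hk' with ⟨s₀, i₀, hab⟩ | ⟨s₀, i₀, hab⟩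
    · -- addition: t (k+1) = t k + box at (s₀, i₀)
      by_cases hs : s = s₀
      · subst hs
        by_cases hii : i = i₀
        · subst hii
          have e := hab.1
          by_cases h0 : (t k s).part i = 0
          · -- need i ≤ k
            rcases Nat.eq_zero_or_pos i with h | h
            · omega
            · have h2 : (t (k+1) s).part i ≤ (t (k+1) s).part (i-1) :=
                (t (k+1) s).antitone (by omega)
              have e2 : (t (k+1) s).part (i-1) = (t k s).part (i-1) :=
                hab.2.1 _ (by omega)
              have h3 := ih (by omega) s (i-1) (by omega)
              omega
          · have := ih (by omega) s i h0; omega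
        · have e := hab.2.1 i hii
          rw [e] at hi ⊢
          have := ih (by omega) s i hi; omega
      · have e := hab.2.2 s hs
        rw [e] at hi ⊢
        have := ih (by omega) s i hi; omega
    · -- removal: t k = t (k+1) + box at (s₀, i₀)
      by_cases hs : s = s₀
      · subst hs
        by_cases hii : i = i₀
        · subst hii
          have e := hab.1
          have := ih (by omega) s i (by omega)
          omega
        · have e := hab.2.1 i hii
          have := ih (by omega) s i (by omega)
          omega
      · have e := hab.2.2 s hs
        rw [← e] at hi ⊢  -- e : t k s = t (k+1) s
        have := ih (by omega) s i hi; omega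

lemma aux_add_diag_bound {r n : ℕ} {lam : Fin r → PartitionSeq} {t : ℕ → Fin r → PartitionSeq}
    (ht : IsUpDownTableau n lam t) {k : ℕ} (hk : k < n) {s : Fin r} {i : ℕ}
    (hab : AddBoxAt (t k) (t (k+1)) s i) :
    |((t k s).part i : ℤ) - i| < n := by
  have hb := aux_part_bound ht k hk.le
  have hi : i ≤ k := by
    rcases Nat.eq_zero_or_pos i with h | h
    · omega
    · have h2 : (t (k+1) s).part i ≤ (t (k+1) s).part (i-1) := (t (k+1) s).antitone (by omega)
      have e2 : (t (k+1) s).part (i-1) = (t k s).part (i-1) := hab.2.1 _ (by omega)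
      have e1 := hab.1
      have h3 := hb s (i-1) (by omega)
      omega
  have hcase : (t k s).part i = 0 ∨ (t k s).part i + i ≤ k := by
    by_cases h0 : (t k s).part i = 0
    · exact Or.inl h0
    · exact Or.inr (hb s i h0)
  rw [abs_lt]
  omega

lemma aux_remove_diag_bound {r n : ℕ} {lam : Fin r → PartitionSeq} {t : ℕ → Fin r → PartitionSeq}
    (ht : IsUpDownTableau n lam t) {k : ℕ} (hk : k < n) {s : Fin r} {i : ℕ}
    (hab : AddBoxAt (t (k+1)) (t k) s i) :
    |((t (k+1) s).part i : ℤ) - i| < n := by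
  have hb := aux_part_bound ht k hk.le
  have e := hab.1
  have h1 := hb s i (by omega)
  rw [abs_lt]
  omega

section Alg
variable {F : Type*} [Field F] {r n : ℕ} {q : F} {u : Fin r → F}

lemma aux_qpow_ne_one (hq : q ≠ 0)
    (horder : ∀ m : ℕ, 1 ≤ m → m ≤ 2 * n → (q ^ 2) ^ m ≠ 1)
    {e : ℤ} (he : e ≠ 0) (hle : |e| ≤ 2 * n) : q ^ (2 * e) ≠ 1 := by
  intro h
  have h2 : (q ^ 2) ^ e = 1 := by
    rw [← zpow_natCast q 2, ← zpow_mul, show ((2:ℕ):ℤ) * e = 2 * e by norm_num]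
    exact h
  have h3 : (q ^ 2) ^ e.natAbs = 1 := by
    rcases Int.natAbs_eq e with he' | he'
    · rw [← zpow_natCast (q^2) e.natAbs, ← he']; exact h2
    · rw [← zpow_natCast (q^2) e.natAbs]
      have h4 : (q^2) ^ (-(e.natAbs : ℤ)) = 1 := by rw [← he']; exact h2
      rw [zpow_neg] at h4
      exact inv_eq_one.mp h4
  have habs := Int.abs_eq_natAbs e
  exact horder e.natAbs (by omega) (by omega) h3

lemma aux_shift (hq : q ≠ 0) (a b : F) (x y : ℤ) (h : a * q ^ x = b * q ^ y) :
    a = b * q ^ (y - x) := by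
  have hx : q ^ x ≠ 0 := zpow_ne_zero x hq
  apply mul_right_cancel₀ hx
  rw [h, mul_assoc, ← zpow_add₀ hq, show y - x + x = y by ring]

lemma aux_add_add (hq : q ≠ 0) (hu : ∀ i, u i ≠ 0)
    (horder : ∀ m : ℕ, 1 ≤ m → m ≤ 2 * n → (q ^ 2) ^ m ≠ 1)
    (hgen : ∀ d : ℤ,
      ((∃ i j, i ≠ j ∧ (u i * u j = q ^ (2 * d) ∨ u i * (u j)⁻¹ = q ^ (2 * d))) ∨
        (∃ i, u i = q ^ d ∨ u i = -(q ^ d))) → (2 * n : ℤ) ≤ |d|)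
    {s s' : Fin r} {d d' : ℤ} (hd : |d| < n) (hd' : |d'| < n)
    (h : u s * q ^ (2*d) = u s' * q ^ (2*d')) : s = s' ∧ d = d' := by
  have h5 : u s = u s' * q ^ (2*d' - 2*d) := aux_shift hq _ _ _ _ h
  by_cases hs : s = s'
  · subst hs
    refine ⟨rfl, ?_⟩
    by_contra hne
    have h7 : u s * 1 = u s * q ^ (2*d' - 2*d) := by rw [mul_one]; exact h5
    have h8 := (mul_left_cancel₀ (hu s) h7).symm
    rw [show 2*d' - 2*d = 2*(d' - d) by ring] at h8
    exact aux_qpow_ne_one hq horder (by omega) (by rw [abs_le]; rw [abs_lt] at hd hd'; omega) h8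
  · exfalso
    have h6 : u s * (u s')⁻¹ = q ^ (2 * (d' - d)) := by
      rw [h5, mul_comm (u s') _, mul_assoc, mul_inv_cancel₀ (hu s'), mul_one,
        show 2*d' - 2*d = 2*(d' - d) by ring]
    have h7 := hgen (d' - d) (Or.inl ⟨s, s', hs, Or.inr h6⟩)
    rw [abs_lt] at hd hd'
    rcases abs_cases (d' - d) with ⟨e1, _⟩ | ⟨e1, _⟩ <;> rw [e1] at h7 <;> omega

lemma aux_add_remove (hq : q ≠ 0) (hu : ∀ i, u i ≠ 0)
    (hgen : ∀ d : ℤ,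
      ((∃ i j, i ≠ j ∧ (u i * u j = q ^ (2 * d) ∨ u i * (u j)⁻¹ = q ^ (2 * d))) ∨
        (∃ i, u i = q ^ d ∨ u i = -(q ^ d))) → (2 * n : ℤ) ≤ |d|)
    {s s' : Fin r} {d d' : ℤ} (hd : |d| < n) (hd' : |d'| < n)
    (h : u s * q ^ (2*d) = (u s')⁻¹ * q ^ (-2*d')) : False := by
  have h5 : u s = (u s')⁻¹ * q ^ (-2*d' - 2*d) := aux_shift hq _ _ _ _ h
  have h6 : u s * u s' = q ^ (2 * (-(d' + d))) := by
    calc u s * u s' = (u s')⁻¹ * q ^ (-2*d' - 2*d) * u s' := by rw [← h5]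
      _ = ((u s')⁻¹ * u s') * q ^ (-2*d' - 2*d) := by ring
      _ = q ^ (-2*d' - 2*d) := by rw [inv_mul_cancel₀ (hu s'), one_mul]
      _ = q ^ (2 * (-(d'+d))) := by rw [show -2*d' - 2*d = 2 * (-(d'+d)) by ring]
  by_cases hs : s = s'
  · subst hs
    set e : ℤ := -(d' + d) with he
    have hqq : q ^ e * q ^ e = q ^ (2 * e) := by
      rw [← zpow_add₀ hq, show e + e = 2*e by ring]
    have hx : (u s - q ^ e) * (u s + q ^ e) = 0 := by
      linear_combination h6 - hqq
    have hin : u s = q ^ e ∨ u s = -(q ^ e) := by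
      rcases mul_eq_zero.mp hx with hx | hx
      · exact Or.inl (sub_eq_zero.mp hx)
      · exact Or.inr (eq_neg_of_add_eq_zero_left hx)
    have h7 := hgen e (Or.inr ⟨s, hin⟩)
    rw [abs_lt] at hd hd'
    rcases abs_cases e with ⟨e1, _⟩ | ⟨e1, _⟩ <;> rw [e1] at h7 <;> omega
  · have h7 := hgen (-(d' + d)) (Or.inl ⟨s, s', hs, Or.inl h6⟩)
    rw [abs_lt] at hd hd'
    rcases abs_cases (-(d' + d)) with ⟨e1, _⟩ | ⟨e1, _⟩ <;> rw [e1] at h7 <;> omega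

lemma aux_inv_form (hq : q ≠ 0) (s : Fin r) (d : ℤ) :
    ((u s)⁻¹ * q ^ (-2*d))⁻¹ = u s * q ^ (2*d) := by
  rw [mul_inv, inv_inv, ← zpow_neg, show -(-2*d) = 2*d by ring]

lemma aux_inv_form' (hq : q ≠ 0) (s : Fin r) (d : ℤ) :
    (u s * q ^ (2*d))⁻¹ = (u s)⁻¹ * q ^ (-2*d) := by
  rw [mul_inv, ← zpow_neg, show -(2*d) = -2*d by ring]

lemma aux_rem_rem (hq : q ≠ 0) (hu : ∀ i, u i ≠ 0)
    (horder : ∀ m : ℕ, 1 ≤ m → m ≤ 2 * n → (q ^ 2) ^ m ≠ 1)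
    (hgen : ∀ d : ℤ,
      ((∃ i j, i ≠ j ∧ (u i * u j = q ^ (2 * d) ∨ u i * (u j)⁻¹ = q ^ (2 * d))) ∨
        (∃ i, u i = q ^ d ∨ u i = -(q ^ d))) → (2 * n : ℤ) ≤ |d|)
    {s s' : Fin r} {d d' : ℤ} (hd : |d| < n) (hd' : |d'| < n)
    (h : (u s)⁻¹ * q ^ (-2*d) = (u s')⁻¹ * q ^ (-2*d')) : s = s' ∧ d = d' := by
  apply aux_add_add hq hu horder hgen hd hd'
  rw [← aux_inv_form (u := u) hq s d, ← aux_inv_form (u := u) hq s' d', h]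

lemma aux_not_q (hq : q ≠ 0)
    (hgen : ∀ d : ℤ,
      ((∃ i j, i ≠ j ∧ (u i * u j = q ^ (2 * d) ∨ u i * (u j)⁻¹ = q ^ (2 * d))) ∨
        (∃ i, u i = q ^ d ∨ u i = -(q ^ d))) → (2 * n : ℤ) ≤ |d|)
    {s : Fin r} {d : ℤ} (hd : |d| < n) :
    ∀ c : F, (c = q ∨ c = -q ∨ c = q⁻¹ ∨ c = -q⁻¹) → u s * q ^ (2*d) ≠ c := by
  have key : ∀ e : ℤ, u s = q ^ e ∨ u s = -(q ^ e) → |e| < 2*n → False := by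
    intro e hin hlt
    have h7 := hgen e (Or.inr ⟨s, hin⟩)
    linarith
  intro c hc h
  rcases hc with hc | hc | hc | hc <;> rw [hc] at h
  · have h' : u s * q ^ (2*d) = 1 * q ^ (1:ℤ) := by rw [one_mul, zpow_one]; exact h
    have h2 := aux_shift hq _ _ _ _ h'
    rw [one_mul] at h2
    exact key (1 - 2*d) (Or.inl h2) (by rw [abs_lt] at hd ⊢; omega)
  · have h' : u s * q ^ (2*d) = (-1) * q ^ (1:ℤ) := by rw [neg_one_mul, zpow_one]; exact h
    have h2 := aux_shift hq _ _ _ _ h'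
    rw [neg_one_mul] at h2
    exact key (1 - 2*d) (Or.inr h2) (by rw [abs_lt] at hd ⊢; omega)
  · have h' : u s * q ^ (2*d) = 1 * q ^ (-1:ℤ) := by rw [one_mul, zpow_neg_one]; exact h
    have h2 := aux_shift hq _ _ _ _ h'
    rw [one_mul] at h2
    exact key (-1 - 2*d) (Or.inl h2) (by rw [abs_lt] at hd ⊢; omega)
  · have h' : u s * q ^ (2*d) = (-1) * q ^ (-1:ℤ) := by rw [neg_one_mul, zpow_neg_one]; exact h
    have h2 := aux_shift hq _ _ _ _ h'
    rw [neg_one_mul] at h2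
    exact key (-1 - 2*d) (Or.inr h2) (by rw [abs_lt] at hd ⊢; omega)

lemma aux_not_q' (hq : q ≠ 0)
    (hgen : ∀ d : ℤ,
      ((∃ i j, i ≠ j ∧ (u i * u j = q ^ (2 * d) ∨ u i * (u j)⁻¹ = q ^ (2 * d))) ∨
        (∃ i, u i = q ^ d ∨ u i = -(q ^ d))) → (2 * n : ℤ) ≤ |d|)
    {s : Fin r} {d : ℤ} (hd : |d| < n) :
    ∀ c : F, (c = q ∨ c = -q ∨ c = q⁻¹ ∨ c = -q⁻¹) → (u s)⁻¹ * q ^ (-2*d) ≠ c := by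
  intro c hc h
  have hmem : c⁻¹ = q ∨ c⁻¹ = -q ∨ c⁻¹ = q⁻¹ ∨ c⁻¹ = -q⁻¹ := by
    rcases hc with rfl | rfl | rfl | rfl
    · right; right; left; rfl
    · right; right; right; rw [inv_neg]
    · left; rw [inv_inv]
    · right; left; rw [inv_neg, inv_inv]
  exact aux_not_q hq hgen (s := s) hd c⁻¹ hmem
    (by rw [← aux_inv_form (u := u) hq s d, h])

end Alg

/-- Suppose the parameters `q, u₁,…,u_r` are generic for `B_{r,n}`
(the order of `q²` exceeds `2n`, and any relation `uᵢuⱼ^{±1} = q^{2d}` with `i ≠ j` or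
`uᵢ = ±q^d` forces `|d| ≥ 2n`).  Let `λ` be an `r`-multipartition of `n − 2f`
(`0 ≤ f ≤ ⌊n/2⌋`) and let `S, T` be `n`-updown `λ`-tableaux with content sequences
`cS, cT`.  Then:
(a) `S = T` iff `cS(k) = cT(k)` for all `1 ≤ k ≤ n`;
(b) `cS(k) ≠ cS(k+1)` for all `1 ≤ k < n`;
(c) if `S_{k−1} = S_{k+1}`, `T ∼_k S` and `T ≠ S`, then `cS(k) ≠ cT(k)` and
    `cS(k) ≠ cT(k)⁻¹`;
(d) `cT(k) ∉ {q, −q, q⁻¹, −q⁻¹}` for all `1 ≤ k ≤ n`. -/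
theorem stmt_10 {F : Type*} [Field F] {r n : ℕ}
    (q : F) (u : Fin r → F) (hq : q ≠ 0) (hu : ∀ i, u i ≠ 0)
    (horder : ∀ m : ℕ, 1 ≤ m → m ≤ 2 * n → (q ^ 2) ^ m ≠ 1)
    (hgen : ∀ d : ℤ,
      ((∃ i j, i ≠ j ∧ (u i * u j = q ^ (2 * d) ∨ u i * (u j)⁻¹ = q ^ (2 * d))) ∨
        (∃ i, u i = q ^ d ∨ u i = -(q ^ d))) → (2 * n : ℤ) ≤ |d|)
    (lam : Fin r → PartitionSeq)
    (hsize : ∃ f : ℕ, 2 * f ≤ n ∧ (∑ s, ∑ᶠ i, (lam s).part i) = n - 2 * f)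
    (S T : ℕ → Fin r → PartitionSeq)
    (hS : IsUpDownTableau n lam S) (hT : IsUpDownTableau n lam T)
    (cS cT : ℕ → F)
    (hcS : IsContent q u S cS) (hcT : IsContent q u T cT) :
    ((∀ k, k ≤ n → S k = T k) ↔ (∀ k, 1 ≤ k → k ≤ n → cS k = cT k)) ∧
    (∀ k, 1 ≤ k → k < n → cS k ≠ cS (k + 1)) ∧
    (∀ k, 1 ≤ k → k < n → S (k - 1) = S (k + 1) →
      (∀ j, j ≤ n → j ≠ k → T j = S j) → T k ≠ S k →
      cS k ≠ cT k ∧ cS k ≠ (cT k)⁻¹) ∧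
    (∀ k, 1 ≤ k → k ≤ n →
      cT k ≠ q ∧ cT k ≠ -q ∧ cT k ≠ q⁻¹ ∧ cT k ≠ -q⁻¹) := by
  refine ⟨⟨?_, ?_⟩, ?_, ?_, ?_⟩
  · -- (a) forward
    intro h k hk1 hkn
    obtain ⟨m, rfl⟩ : ∃ m, k = m + 1 := ⟨k - 1, by omega⟩
    have hm : m < n := by omega
    rcases hS.2.2 m hm with ⟨s, i, hab⟩ | ⟨s, i, hab⟩
    · have e1 := (hcS m).1 s i hab
      rw [h m (by omega), h (m+1) (by omega)] at hab
      have e2 := (hcT m).1 s i hab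
      rw [e1, e2, ← h m (by omega)]
    · have e1 := (hcS m).2 s i hab
      rw [h m (by omega), h (m+1) (by omega)] at hab
      have e2 := (hcT m).2 s i hab
      rw [e1, e2, ← h (m+1) (by omega)]
  · -- (a) backward
    intro h k
    induction k with
    | zero => intro _; rw [hS.1, hT.1]
    | succ m ih =>
      intro hk
      have hm : m < n := by omega
      have hSm : S m = T m := ih (by omega)
      have hceq : cS (m+1) = cT (m+1) := h (m+1) (by omega) (by omega)
      rcases hS.2.2 m hm with ⟨s, i, habS⟩ | ⟨s, i, habS⟩ <;>
        rcases hT.2.2 m hm with ⟨s', i', habT⟩ | ⟨s', i', habT⟩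
      · -- add/add
        have e1 := (hcS m).1 s i habS
        have e2 := (hcT m).1 s' i' habT
        have hd := aux_add_diag_bound hS hm habS
        have hd' := aux_add_diag_bound hT hm habT
        have h3 : u s * q ^ (2 * (((S m s).part i : ℤ) - i))
            = u s' * q ^ (2 * (((T m s').part i' : ℤ) - i')) := by
          rw [← e1, ← e2]; exact hceq
        obtain ⟨rfl, hdd⟩ := aux_add_add hq hu horder hgen hd hd' h3
        rw [← hSm] at hdd habT
        have hii : i = i' := aux_diag_inj (S m s) hdd
        subst hii
        exact aux_addBoxAt_right_unique habS habT
      · -- S add / T remove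
        have e1 := (hcS m).1 s i habS
        have e2 := (hcT m).2 s' i' habT
        have hd := aux_add_diag_bound hS hm habS
        have hd' := aux_remove_diag_bound hT hm habT
        have h3 : u s * q ^ (2 * (((S m s).part i : ℤ) - i))
            = (u s')⁻¹ * q ^ (-2 * (((T (m+1) s').part i' : ℤ) - i')) := by
          rw [← e1, ← e2]; exact hceq
        exact (aux_add_remove hq hu hgen hd hd' h3).elim
      · -- S remove / T add
        have e1 := (hcS m).2 s i habS
        have e2 := (hcT m).1 s' i' habT
        have hd := aux_remove_diag_bound hS hm habS
        have hd' := aux_add_diag_bound hT hm habT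
        have h3 : u s' * q ^ (2 * (((T m s').part i' : ℤ) - i'))
            = (u s)⁻¹ * q ^ (-2 * (((S (m+1) s).part i : ℤ) - i)) := by
          rw [← e1, ← e2]; exact hceq.symm
        exact (aux_add_remove hq hu hgen hd' hd h3).elim
      · -- remove/remove
        have e1 := (hcS m).2 s i habS
        have e2 := (hcT m).2 s' i' habT
        have hd := aux_remove_diag_bound hS hm habS
        have hd' := aux_remove_diag_bound hT hm habT
        have h3 : (u s)⁻¹ * q ^ (-2 * (((S (m+1) s).part i : ℤ) - i))
            = (u s')⁻¹ * q ^ (-2 * (((T (m+1) s').part i' : ℤ) - i')) := by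
          rw [← e1, ← e2]; exact hceq
        obtain ⟨rfl, hdd⟩ := aux_rem_rem hq hu horder hgen hd hd' h3
        rw [← hSm] at habT
        have f1 : (S m s).part i = (S (m+1) s).part i + 1 := habS.1
        have f2 : (S m s).part i' = (T (m+1) s).part i' + 1 := habT.1
        have hiieq : ((S m s).part i : ℤ) - i = ((S m s).part i' : ℤ) - i' := by omega
        have hii : i = i' := aux_diag_inj (S m s) hiieq
        subst hii
        exact aux_addBoxAt_left_unique habS habT
  · -- (b)
    intro k hk1 hkn hEq
    obtain ⟨m, rfl⟩ : ∃ m, k = m + 1 := ⟨k - 1, by omega⟩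
    have hm : m < n := by omega
    have hm1 : m + 1 < n := by omega
    rcases hS.2.2 m hm with ⟨s, i, hab1⟩ | ⟨s, i, hab1⟩ <;>
      rcases hS.2.2 (m+1) hm1 with ⟨s', i', hab2⟩ | ⟨s', i', hab2⟩
    · -- add then add
      have e1 := (hcS m).1 s i hab1
      have e2 := (hcS (m+1)).1 s' i' hab2
      have hd := aux_add_diag_bound hS hm hab1
      have hd' := aux_add_diag_bound hS hm1 hab2
      have h3 : u s * q ^ (2 * (((S m s).part i : ℤ) - i))
          = u s' * q ^ (2 * (((S (m+1) s').part i' : ℤ) - i')) := by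
        rw [← e1, ← e2]; exact hEq
      obtain ⟨rfl, hdd⟩ := aux_add_add hq hu horder hgen hd hd' h3
      by_cases hii : i' = i
      · subst hii
        have f1 : (S (m+1) s).part i' = (S m s).part i' + 1 := hab1.1
        omega
      · have e := hab1.2.1 i' hii
        rw [e] at hdd
        exact hii (aux_diag_inj (S m s) hdd).symm
    · -- add then remove
      have e1 := (hcS m).1 s i hab1
      have e2 := (hcS (m+1)).2 s' i' hab2
      have hd := aux_add_diag_bound hS hm hab1
      have hd' := aux_remove_diag_bound hS hm1 hab2
      have h3 : u s * q ^ (2 * (((S m s).part i : ℤ) - i))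
          = (u s')⁻¹ * q ^ (-2 * (((S (m+2) s').part i' : ℤ) - i')) := by
        rw [← e1, ← e2]; exact hEq
      exact aux_add_remove hq hu hgen hd hd' h3
    · -- remove then add
      have e1 := (hcS m).2 s i hab1
      have e2 := (hcS (m+1)).1 s' i' hab2
      have hd := aux_remove_diag_bound hS hm hab1
      have hd' := aux_add_diag_bound hS hm1 hab2
      have h3 : u s' * q ^ (2 * (((S (m+1) s').part i' : ℤ) - i'))
          = (u s)⁻¹ * q ^ (-2 * (((S (m+1) s).part i : ℤ) - i)) := by
        rw [← e1, ← e2]; exact hEq.symm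
      exact aux_add_remove hq hu hgen hd' hd h3
    · -- remove then remove
      have e1 := (hcS m).2 s i hab1
      have e2 := (hcS (m+1)).2 s' i' hab2
      have hd := aux_remove_diag_bound hS hm hab1
      have hd' := aux_remove_diag_bound hS hm1 hab2
      have h3 : (u s)⁻¹ * q ^ (-2 * (((S (m+1) s).part i : ℤ) - i))
          = (u s')⁻¹ * q ^ (-2 * (((S (m+1+1) s').part i' : ℤ) - i')) := by
        rw [← e1, ← e2]; exact hEq
      obtain ⟨rfl, hdd⟩ := aux_rem_rem hq hu horder hgen hd hd' h3
      have f2 : (S (m+1) s).part i' = (S (m+1+1) s).part i' + 1 := hab2.1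
      exact aux_add_remove_diag_ne (S (m+1) s) (S m s) i hab1.1 hab1.2.1 i' (by omega)
  · -- (c)
    intro k hk1 hkn hS2 hTag hne
    obtain ⟨m, rfl⟩ : ∃ m, k = m + 1 := ⟨k - 1, by omega⟩
    have hm : m < n := by omega
    have hTm : T m = S m := hTag m (by omega) (by omega)
    rcases hS.2.2 m hm with ⟨s, i, habS⟩ | ⟨s, i, habS⟩ <;>
      rcases hT.2.2 m hm with ⟨s', i', habT⟩ | ⟨s', i', habT⟩
    · -- S add / T add
      have e1 := (hcS m).1 s i habS
      have e2 := (hcT m).1 s' i' habT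
      have hd := aux_add_diag_bound hS hm habS
      have hd' := aux_add_diag_bound hT hm habT
      constructor
      · intro hEq
        have h3 : u s * q ^ (2 * (((S m s).part i : ℤ) - i))
            = u s' * q ^ (2 * (((T m s').part i' : ℤ) - i')) := by
          rw [← e1, ← e2]; exact hEq
        obtain ⟨rfl, hdd⟩ := aux_add_add hq hu horder hgen hd hd' h3
        rw [hTm] at hdd habT
        have hii : i = i' := aux_diag_inj (S m s) hdd
        subst hii
        exact hne (aux_addBoxAt_right_unique habT habS)
      · intro hEq
        have h3 : u s * q ^ (2 * (((S m s).part i : ℤ) - i))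
            = (u s')⁻¹ * q ^ (-2 * (((T m s').part i' : ℤ) - i')) := by
          rw [← e1, hEq, e2, aux_inv_form' (u := u) hq]
        exact aux_add_remove hq hu hgen hd hd' h3
    · -- S add / T remove
      have e1 := (hcS m).1 s i habS
      have e2 := (hcT m).2 s' i' habT
      have hd := aux_add_diag_bound hS hm habS
      have hd' := aux_remove_diag_bound hT hm habT
      constructor
      · intro hEq
        have h3 : u s * q ^ (2 * (((S m s).part i : ℤ) - i))
            = (u s')⁻¹ * q ^ (-2 * (((T (m+1) s').part i' : ℤ) - i')) := by
          rw [← e1, ← e2]; exact hEq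
        exact aux_add_remove hq hu hgen hd hd' h3
      · intro hEq
        have h3 : u s * q ^ (2 * (((S m s).part i : ℤ) - i))
            = u s' * q ^ (2 * (((T (m+1) s').part i' : ℤ) - i')) := by
          rw [← e1, hEq, e2, aux_inv_form (u := u) hq]
        obtain ⟨rfl, hdd⟩ := aux_add_add hq hu horder hgen hd hd' h3
        rw [hTm] at habT
        have f : (S m s).part i' = (T (m+1) s).part i' + 1 := habT.1
        exact aux_add_remove_diag_ne (S m s) (S (m+1) s) i habS.1 habS.2.1 i' (by omega)
    · -- S remove / T add
      have e1 := (hcS m).2 s i habS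
      have e2 := (hcT m).1 s' i' habT
      have hd := aux_remove_diag_bound hS hm habS
      have hd' := aux_add_diag_bound hT hm habT
      constructor
      · intro hEq
        have h3 : u s' * q ^ (2 * (((T m s').part i' : ℤ) - i'))
            = (u s)⁻¹ * q ^ (-2 * (((S (m+1) s).part i : ℤ) - i)) := by
          rw [← e1, ← e2]; exact hEq.symm
        exact aux_add_remove hq hu hgen hd' hd h3
      · intro hEq
        have h3 : (u s)⁻¹ * q ^ (-2 * (((S (m+1) s).part i : ℤ) - i))
            = (u s')⁻¹ * q ^ (-2 * (((T m s').part i' : ℤ) - i')) := by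
          rw [← e1, hEq, e2, aux_inv_form' (u := u) hq]
        obtain ⟨rfl, hdd⟩ := aux_rem_rem hq hu horder hgen hd hd' h3
        rw [hTm] at habT hdd
        have f : (S m s).part i = (S (m+1) s).part i + 1 := habS.1
        exact aux_add_remove_diag_ne (S m s) (T (m+1) s) i' habT.1 habT.2.1 i (by omega)
    · -- S remove / T remove
      have e1 := (hcS m).2 s i habS
      have e2 := (hcT m).2 s' i' habT
      have hd := aux_remove_diag_bound hS hm habS
      have hd' := aux_remove_diag_bound hT hm habT
      constructor
      · intro hEq
        have h3 : (u s)⁻¹ * q ^ (-2 * (((S (m+1) s).part i : ℤ) - i))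
            = (u s')⁻¹ * q ^ (-2 * (((T (m+1) s').part i' : ℤ) - i')) := by
          rw [← e1, ← e2]; exact hEq
        obtain ⟨rfl, hdd⟩ := aux_rem_rem hq hu horder hgen hd hd' h3
        rw [hTm] at habT
        have f1 : (S m s).part i = (S (m+1) s).part i + 1 := habS.1
        have f2 : (S m s).part i' = (T (m+1) s).part i' + 1 := habT.1
        have hiieq : ((S m s).part i : ℤ) - i = ((S m s).part i' : ℤ) - i' := by omega
        have hii : i = i' := aux_diag_inj (S m s) hiieq
        subst hii
        exact hne (aux_addBoxAt_left_unique habT habS)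
      · intro hEq
        have h3 : u s' * q ^ (2 * (((T (m+1) s').part i' : ℤ) - i'))
            = (u s)⁻¹ * q ^ (-2 * (((S (m+1) s).part i : ℤ) - i)) := by
          rw [← e1, hEq, e2, aux_inv_form (u := u) hq]
        exact aux_add_remove hq hu hgen hd' hd h3
  · -- (d)
    intro k hk1 hkn
    obtain ⟨m, rfl⟩ : ∃ m, k = m + 1 := ⟨k - 1, by omega⟩
    have hm : m < n := by omega
    rcases hT.2.2 m hm with ⟨s, i, hab⟩ | ⟨s, i, hab⟩
    · have e := (hcT m).1 s i hab
      have hd := aux_add_diag_bound hT hm hab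
      rw [e]
      exact ⟨aux_not_q hq hgen hd q (Or.inl rfl),
        aux_not_q hq hgen hd (-q) (Or.inr (Or.inl rfl)),
        aux_not_q hq hgen hd q⁻¹ (Or.inr (Or.inr (Or.inl rfl))),
        aux_not_q hq hgen hd (-q⁻¹) (Or.inr (Or.inr (Or.inr rfl)))⟩
    · have e := (hcT m).2 s i hab
      have hd := aux_remove_diag_bound hT hm hab
      rw [e]
      exact ⟨aux_not_q' hq hgen hd q (Or.inl rfl),
        aux_not_q' hq hgen hd (-q) (Or.inr (Or.inl rfl)),
        aux_not_q' hq hgen hd q⁻¹ (Or.inr (Or.inr (Or.inl rfl))),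
        aux_not_q' hq hgen hd (-q⁻¹) (Or.inr (Or.inr (Or.inr rfl)))⟩
end

section
/- In the field F(y) of rational functions, define W(y) := y²/(y² − 1) − δ^{-1}·ϱ + (δ^{-1}·ϱ·C + y/(y² − 1))·C·∏_{i=1}^m (y − c_i^{-1})/(y − c_i), where C := c_1⋯c_m. Then W(y)/y = ∑_{i=1}^m E_i·(y − c_i)^{-1}, where E_i := (ϱ·c_i)^{-1}·((c_i − c_i^{-1})·δ^{-1} + ε)·∏_{j≠i} (c_i − c_j^{-1})/(c_i − c_j). In particular W(y)/y has only simple poles, located among the points c_1, …, c_m, and no pole at 0, 1, −1 or ∞. -/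
/-!
Multiplying by `y (y² − 1) ∏ (y − cᵢ)` turns the claim into an identity between two polynomials
of degree at most `m + 2`, so it suffices to compare them at the `m + 3` distinct points
`0, 1, −1, c₁, …, c_m`. At `0` and `±1` both sides vanish: the right side visibly, the left side
because `c₁⋯c_m · ∏ (a − cᵢ⁻¹) = ∏ (cᵢ a − 1)` and `m` is odd. At `cᵢ` only the `i`-th partial
fraction survives, and the comparison reduces to a scalar identity in which `ϱ⁻¹ = ε c₁⋯c_m` and
`ε² = 1` give `ϱ (c₁⋯c_m)² = ϱ⁻¹`.
-/

open Polynomial Finset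

lemma prod_neg_of_odd_card {M ι : Type*} [CommMonoid M] [HasDistribNeg M] [Fintype ι]
    (h : Odd (Fintype.card ι)) (f : ι → M) : ∏ i, -f i = -∏ i, f i := by
  rw [prod_neg, card_univ, h.neg_one_pow, neg_one_mul]

lemma prod_mul_prod_sub_inv {K ι : Type*} [Field K] [Fintype ι] {c : ι → K}
    (hc : ∀ i, c i ≠ 0) (a : K) : (∏ i, c i) * ∏ i, (a - (c i)⁻¹) = ∏ i, (c i * a - 1) := by
  rw [← prod_mul_distrib]
  exact prod_congr rfl fun i _ ↦ by rw [mul_sub, mul_inv_cancel₀ (hc i)]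

lemma eval_sum_C_mul_prod_erase {R ι : Type*} [CommRing R] [Fintype ι] [DecidableEq ι]
    (a c : ι → R) (i : ι) :
    eval (c i) (∑ k, C (a k) * ∏ j ∈ univ.erase k, (X - C (c j)))
      = a i * ∏ j ∈ univ.erase i, (c i - c j) := by
  simp only [eval_finsetSum, eval_mul, eval_C, eval_prod, eval_sub, eval_X]
  refine sum_eq_single_of_mem i (mem_univ i) fun k _ hk ↦ ?_
  rw [prod_eq_zero (mem_erase.mpr ⟨Ne.symm hk, mem_univ i⟩) (sub_self _), mul_zero]

lemma natDegree_sum_C_mul_prod_erase_le {R ι : Type*} [CommRing R] [Fintype ι] [DecidableEq ι]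
    (a c : ι → R) :
    natDegree (∑ k, C (a k) * ∏ j ∈ univ.erase k, (X - C (c j))) ≤ Fintype.card ι - 1 := by
  refine natDegree_sum_le_of_forall_le _ _ fun k _ ↦ (natDegree_C_mul_le _ _).trans ?_
  refine (natDegree_prod_le _ _).trans ((sum_le_sum fun j _ ↦ natDegree_X_sub_C_le (c j)).trans ?_)
  simp [card_erase_of_mem]

lemma pole_coefficient_eq {F : Type*} [Field F] {d ϱ ε x C₀ : F} (hϱ : ϱ ≠ 0) (hx : x ≠ 0)
    (hε : ε ^ 2 = 1) (hC₀ : ϱ⁻¹ = ε * C₀) :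
    (d * ϱ * C₀ * (x ^ 2 - 1) + x) * C₀ * (x - x⁻¹)
      = x * (x ^ 2 - 1) * ((ϱ * x)⁻¹ * ((x - x⁻¹) * d + ε)) := by
  obtain rfl : C₀ = ε * ϱ⁻¹ := by linear_combination -ε * hC₀ - C₀ * hε
  field_simp
  linear_combination d * (x ^ 2 - 1) ^ 2 * hε

section

variable {F ι : Type*} [Field F] [Fintype ι]

/-- `(X² − 1) · ∏ (X − cᵢ) · W(X)`, where `d` stands for `δ⁻¹`. -/
noncomputable def numerator (d ϱ : F) (c : ι → F) : F[X] :=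
  X ^ 2 * ∏ i, (X - C (c i)) - C (d * ϱ) * (X ^ 2 - 1) * ∏ i, (X - C (c i))
    + (C (d * ϱ * ∏ i, c i) * (X ^ 2 - 1) + X) * C (∏ i, c i) * ∏ i, (X - C (c i)⁻¹)

def residue [DecidableEq ι] (d ϱ ε : F) (c : ι → F) (i : ι) : F :=
  (ϱ * c i)⁻¹ * ((c i - (c i)⁻¹) * d + ε) * ∏ j ∈ univ.erase i, (c i - (c j)⁻¹) / (c i - c j)

variable {c : ι → F} (hc : ∀ i, c i ≠ 0) (d ϱ : F)
include hc

lemma numerator_eval_zero (hodd : Odd (Fintype.card ι)) : eval 0 (numerator d ϱ c) = 0 := by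
  have hQ : ∏ i, (0 - c i) = -∏ i, c i := by
    simp only [zero_sub]; exact prod_neg_of_odd_card hodd c
  have hP : (∏ i, c i) * ∏ i, (0 - (c i)⁻¹) = -1 := by
    rw [prod_mul_prod_sub_inv hc]
    simp [hodd.neg_one_pow]
  simp only [numerator, eval_add, eval_sub, eval_mul, eval_pow, eval_X, eval_C, eval_one,
    eval_prod, hQ]
  linear_combination -d * ϱ * (∏ i, c i) * hP

lemma numerator_eval_one (hodd : Odd (Fintype.card ι)) : eval 1 (numerator d ϱ c) = 0 := by
  have hP : (∏ i, c i) * ∏ i, (1 - (c i)⁻¹) = -∏ i, (1 - c i) := by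
    rw [prod_mul_prod_sub_inv hc, ← prod_neg_of_odd_card hodd]
    exact prod_congr rfl fun i _ ↦ by ring
  simp only [numerator, eval_add, eval_sub, eval_mul, eval_pow, eval_X, eval_C, eval_one,
    eval_prod]
  linear_combination hP

lemma numerator_eval_neg_one : eval (-1) (numerator d ϱ c) = 0 := by
  have hP : (∏ i, c i) * ∏ i, (-1 - (c i)⁻¹) = ∏ i, (-1 - c i) := by
    rw [prod_mul_prod_sub_inv hc]
    exact prod_congr rfl fun i _ ↦ by ring
  simp only [numerator, eval_add, eval_sub, eval_mul, eval_pow, eval_X, eval_C, eval_one,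
    eval_prod]
  linear_combination -hP

lemma numerator_eval_apply [DecidableEq ι] (hinj : Function.Injective c) {ε : F} (hϱ : ϱ ≠ 0)
    (hε : ε ^ 2 = 1) (hϱε : ϱ⁻¹ = ε * ∏ i, c i) (i : ι) :
    eval (c i) (numerator d ϱ c)
      = c i * (c i ^ 2 - 1) * (residue d ϱ ε c i * ∏ j ∈ univ.erase i, (c i - c j)) := by
  set x := c i
  have hQ : ∏ j, (x - c j) = 0 := prod_eq_zero (mem_univ i) (sub_self x)
  have hP : ∏ j, (x - (c j)⁻¹) = (x - x⁻¹) * ∏ j ∈ univ.erase i, (x - (c j)⁻¹) :=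
    (mul_prod_erase _ _ (mem_univ i)).symm
  have hE : residue d ϱ ε c i * ∏ j ∈ univ.erase i, (x - c j)
      = (ϱ * x)⁻¹ * ((x - x⁻¹) * d + ε) * ∏ j ∈ univ.erase i, (x - (c j)⁻¹) := by
    have hne : ∏ j ∈ univ.erase i, (x - c j) ≠ 0 := prod_ne_zero_iff.mpr fun j hj ↦
      sub_ne_zero.mpr fun h ↦ (mem_erase.mp hj).1 (hinj h).symm
    rw [residue, prod_div_distrib, mul_assoc, div_mul_cancel₀ _ hne]
  simp only [numerator, eval_add, eval_sub, eval_mul, eval_pow, eval_X, eval_C, eval_one,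
    eval_prod, hQ, hP, hE]
  linear_combination
    (∏ j ∈ univ.erase i, (x - (c j)⁻¹)) * pole_coefficient_eq (d := d) hϱ (hc i) hε hϱε

omit hc in
lemma natDegree_numerator_le : (numerator d ϱ c).natDegree ≤ Fintype.card ι + 2 := by
  have hQ : (∏ i, (X - C (c i))).natDegree ≤ Fintype.card ι :=
    (natDegree_finsetProd_X_sub_C_eq_card _ _).le
  have hP : (∏ i, (X - C (c i)⁻¹)).natDegree ≤ Fintype.card ι :=
    (natDegree_finsetProd_X_sub_C_eq_card _ _).le
  have hsq : ((X : F[X]) ^ 2 - 1).natDegree ≤ 2 := by compute_degree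
  have hlin : (C (d * ϱ * ∏ i, c i) * (X ^ 2 - 1) + X).natDegree ≤ 2 := by compute_degree
  have h₁ := natDegree_mul_le_of_le (natDegree_X_pow_le 2) hQ
  have h₂ := natDegree_mul_le_of_le ((natDegree_C_mul_le (d * ϱ) _).trans hsq) hQ
  have h₃ := natDegree_mul_le_of_le ((natDegree_mul_C_le _ (∏ i, c i)).trans hlin) hP
  rw [add_comm]
  exact natDegree_add_le_of_degree_le ((natDegree_sub_le_of_le h₁ h₂).trans (max_self _).le) h₃

end

theorem numerator_eq {F ι : Type*} [Field F] [Fintype ι] [DecidableEq ι] (h2 : (2 : F) ≠ 0)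
    (d ϱ : F) {c : ι → F} (hodd : Odd (Fintype.card ι)) (hinj : Function.Injective c)
    (hc : ∀ i, c i ≠ 0 ∧ c i ≠ 1 ∧ c i ≠ -1) {ε : F} (hϱ : ϱ ≠ 0) (hε : ε ^ 2 = 1)
    (hϱε : ϱ⁻¹ = ε * ∏ i, c i) :
    numerator d ϱ c
      = X * (X ^ 2 - 1) * ∑ i, C (residue d ϱ ε c i) * ∏ j ∈ univ.erase i, (X - C (c j)) := by
  have hpts : Function.Injective (![0, 1, -1] : Fin 3 → F) := by
    have : (1 : F) ≠ -1 := fun h ↦ h2 (by linear_combination h)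
    intro a b hab
    fin_cases a <;> fin_cases b <;> simp [this, this.symm] at hab ⊢
  have hinj' : Function.Injective (Sum.elim c ![0, 1, -1]) := by
    refine hinj.sumElim hpts fun i k ↦ ?_
    fin_cases k <;> simp [hc i]
  refine eq_of_natDegree_lt_card_of_eval_eq _ _ hinj' ?_ ?_
  · rintro (i | k)
    · rw [Sum.elim_inl, numerator_eval_apply (fun i ↦ (hc i).1) d ϱ hinj hϱ hε hϱε, eval_mul,
        eval_sum_C_mul_prod_erase]
      simp
    · fin_cases k
      · simp [numerator_eval_zero (fun i ↦ (hc i).1) d ϱ hodd]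
      · simp [numerator_eval_one (fun i ↦ (hc i).1) d ϱ hodd]
      · simp [numerator_eval_neg_one (fun i ↦ (hc i).1) d ϱ]
  · have hS := natDegree_sum_C_mul_prod_erase_le (residue d ϱ ε c) c
    have hcubic : ((X : F[X]) * (X ^ 2 - 1)).natDegree ≤ 3 := by compute_degree
    have := natDegree_mul_le_of_le hcubic hS
    have := natDegree_numerator_le (c := c) d ϱ
    have := hodd.pos
    simp only [Fintype.card_sum, Fintype.card_fin]
    omega

lemma sum_mul_inv_sub_eq_div {K ι : Type*} [Field K] [Fintype ι] [DecidableEq ι] {x : K}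
    {c : ι → K} (hx : ∀ i, x - c i ≠ 0) (a : ι → K) :
    ∑ i, a i * (x - c i)⁻¹ = (∑ i, a i * ∏ j ∈ univ.erase i, (x - c j)) / ∏ i, (x - c i) := by
  rw [eq_div_iff (prod_ne_zero_iff.mpr fun i _ ↦ hx i), sum_mul]
  refine sum_congr rfl fun i _ ↦ ?_
  rw [← mul_prod_erase _ _ (mem_univ i), ← mul_assoc, mul_assoc (a i), inv_mul_cancel₀ (hx i),
    mul_one]

lemma div_eq_of_numerator_eq {K : Type*} [Field K] {x a b C₀ P Q S : K} (hx : x ≠ 0)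
    (hsq : x ^ 2 - 1 ≠ 0) (hQ : Q ≠ 0)
    (h : x ^ 2 * Q - a * (x ^ 2 - 1) * Q + (b * (x ^ 2 - 1) + x) * C₀ * P = x * (x ^ 2 - 1) * S) :
    (x ^ 2 / (x ^ 2 - 1) - a + (b + x / (x ^ 2 - 1)) * C₀ * (P / Q)) / x = S / Q := by
  field_simp
  linear_combination h

theorem stmt_12_general {F : Type*} [Field F] (h2 : (2 : F) ≠ 0)
    (q ϱ ε : F) (hϱ : ϱ ≠ 0)
    {m : ℕ} (hm : Odd m)
    (c : Fin m → F) (hcinj : Function.Injective c)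
    (hc : ∀ i, c i ≠ 0 ∧ c i ≠ 1 ∧ c i ≠ -1)
    (hε : ε = 1 ∨ ε = -1)
    (hϱε : ϱ⁻¹ = ε * ∏ l, c l) :
    (RatFunc.X ^ 2 / (RatFunc.X ^ 2 - 1) - RatFunc.C ((q - q⁻¹)⁻¹ * ϱ) +
        (RatFunc.C ((q - q⁻¹)⁻¹ * ϱ * ∏ l, c l) +
            RatFunc.X / (RatFunc.X ^ 2 - 1)) *
          RatFunc.C (∏ l, c l) *
          ∏ i, (RatFunc.X - RatFunc.C ((c i)⁻¹)) / (RatFunc.X - RatFunc.C (c i))) /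
        RatFunc.X =
      ∑ i, RatFunc.C ((ϱ * c i)⁻¹ * ((c i - (c i)⁻¹) * (q - q⁻¹)⁻¹ + ε) *
            ∏ j ∈ Finset.univ.erase i, (c i - (c j)⁻¹) / (c i - c j)) *
          (RatFunc.X - RatFunc.C (c i))⁻¹ := by
  have hε2 : ε ^ 2 = 1 := by rcases hε with rfl | rfl <;> norm_num
  have hX : (RatFunc.X : RatFunc F) ≠ 0 := RatFunc.X_ne_zero
  have hsq : (RatFunc.X : RatFunc F) ^ 2 - 1 ≠ 0 := by
    simpa using RatFunc.algebraMap_ne_zero (K := F) (X_pow_sub_C_ne_zero two_pos 1)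
  have hXc : ∀ i, (RatFunc.X : RatFunc F) - RatFunc.C (c i) ≠ 0 := fun i ↦ by
    simpa using RatFunc.algebraMap_ne_zero (K := F) (X_sub_C_ne_zero (c i))
  rw [sum_mul_inv_sub_eq_div hXc, prod_div_distrib]
  refine div_eq_of_numerator_eq hX hsq (prod_ne_zero_iff.mpr fun i _ ↦ hXc i) ?_
  simpa only [numerator, residue, map_add, map_sub, map_mul, map_pow, map_one, map_sum, map_prod,
    RatFunc.algebraMap_X, RatFunc.algebraMap_C] using congrArg (algebraMap F[X] (RatFunc F))
    (numerator_eq h2 (q - q⁻¹)⁻¹ ϱ (by simpa using hm) hcinj hc hϱ hε2 hϱε)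

/-- Let `F` be a field of characteristic `≠ 2`, `δ = q − q⁻¹` invertible,
`m` odd, `c₁,…,c_m` pairwise distinct elements of `F∖{0,1,−1}`, `ε ∈ {1,−1}`, and
`ϱ⁻¹ = ε·c₁⋯c_m`.  In `F(y)` set
`W(y) = y²/(y² − 1) − δ⁻¹ϱ + (δ⁻¹ϱ·C + y/(y² − 1))·C·∏ᵢ (y − cᵢ⁻¹)/(y − cᵢ)` with
`C = c₁⋯c_m`.  Then `W(y)/y = ∑ᵢ Eᵢ/(y − cᵢ)`, where
`Eᵢ = (ϱcᵢ)⁻¹((cᵢ − cᵢ⁻¹)δ⁻¹ + ε)·∏_{j≠i}(cᵢ − cⱼ⁻¹)/(cᵢ − cⱼ)`. -/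
theorem stmt_12 {F : Type*} [Field F] (h2 : (2 : F) ≠ 0)
    (q ϱ ε : F) (hq : q ≠ 0) (hδ : q - q⁻¹ ≠ 0) (hϱ : ϱ ≠ 0)
    {m : ℕ} (hm : Odd m) (hm1 : 1 ≤ m)
    (c : Fin m → F) (hcinj : Function.Injective c)
    (hc : ∀ i, c i ≠ 0 ∧ c i ≠ 1 ∧ c i ≠ -1)
    (hε : ε = 1 ∨ ε = -1)
    (hϱε : ϱ⁻¹ = ε * ∏ l, c l) :
    (RatFunc.X ^ 2 / (RatFunc.X ^ 2 - 1) - RatFunc.C ((q - q⁻¹)⁻¹ * ϱ) +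
        (RatFunc.C ((q - q⁻¹)⁻¹ * ϱ * ∏ l, c l) +
            RatFunc.X / (RatFunc.X ^ 2 - 1)) *
          RatFunc.C (∏ l, c l) *
          ∏ i, (RatFunc.X - RatFunc.C ((c i)⁻¹)) / (RatFunc.X - RatFunc.C (c i))) /
        RatFunc.X =
      ∑ i, RatFunc.C ((ϱ * c i)⁻¹ * ((c i - (c i)⁻¹) * (q - q⁻¹)⁻¹ + ε) *
            ∏ j ∈ Finset.univ.erase i, (c i - (c j)⁻¹) / (c i - c j)) *
          (RatFunc.X - RatFunc.C (c i))⁻¹ :=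
  stmt_12_general h2 q ϱ ε hϱ hm c hcinj hc hε hϱε
end
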